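/- arXiv:math/0702649 — 8 statements merged into one kernel-verified Lean document; each statement's English description precedes it below -/
import Mathlib

section
/- Let V be an isometry on a Hilbert space H. Then H decomposes uniquely as an orthogonal direct sum H = H_u ⊕ H_s of subspaces reducing V, such that V restricted to H_u is unitary and H_s = ⊕_{n≥0} V^n(W) where W = H ⊖ V(H) (so V restricted to H_s is a unilateral shift of some multiplicity). -/
set_option maxHeartbeats 1000000
set_option synthInstance.maxHeartbeats 200000


open ContinuousLinearMap Submodule

/-- Wold decomposition for a single isometry. -/
theorem wold_decomposition
    {H : Type*} [NormedAddCommGroup H] [InnerProductSpace ℂ H] [CompleteSpace H]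
    (V : H →L[ℂ] H) (hV : ∀ x, ‖V x‖ = ‖x‖) :
    ∃! p : Submodule ℂ H × Submodule ℂ H,
      IsClosed (p.1 : Set H) ∧
      p.2 = p.1ᗮ ∧
      Submodule.map (V : H →ₗ[ℂ] H) p.1 = p.1 ∧
      Submodule.map (V : H →ₗ[ℂ] H) p.2 ≤ p.2 ∧
      p.2 = (⨆ n : ℕ, Submodule.map ((V ^ n : H →L[ℂ] H) : H →ₗ[ℂ] H) ((LinearMap.range (V : H →ₗ[ℂ] H))ᗮ)).topologicalClosure := by
  classical
  set W : Submodule ℂ H := (LinearMap.range (V : H →ₗ[ℂ] H))ᗮ with hWdef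
  set S : Submodule ℂ H := ⨆ n : ℕ, Submodule.map ((V ^ n : H →L[ℂ] H) : H →ₗ[ℂ] H) W with hSdef
  -- V preserves inner products
  have hinner : ∀ x y : H, (inner ℂ (V x) (V y) : ℂ) = inner ℂ x y := fun x y =>
    LinearIsometry.inner_map_map ⟨V.toLinearMap, hV⟩ x y
  -- the range of V is closed
  have hrangeclosed : IsClosed ((LinearMap.range (V : H →ₗ[ℂ] H) : Submodule ℂ H) : Set H) := by
    have hiso : Isometry (V : H → H) :=
      AddMonoidHomClass.isometry_of_norm V hV
    exact hiso.isClosedEmbedding.isClosed_range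
  -- membership in Sᗮ
  have hmemu : ∀ x : H, x ∈ Sᗮ ↔
      ∀ (n : ℕ) (w : H), w ∈ W → (inner ℂ ((V ^ n) w) x : ℂ) = 0 := by
    intro x
    rw [hSdef, ← Submodule.iInf_orthogonal]
    simp only [Submodule.mem_iInf, Submodule.mem_orthogonal]
    constructor
    · intro h n w hw
      exact h n _ ⟨w, hw, rfl⟩
    · rintro h n _ ⟨w, hw, rfl⟩
      exact h n w hw
  -- V maps Sᗮ into itself
  have hmapu_le : Submodule.map (V : H →ₗ[ℂ] H) Sᗮ ≤ Sᗮ := by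
    rintro _ ⟨x, hx, rfl⟩
    simp only [SetLike.mem_coe] at hx
    rw [hmemu] at hx
    rw [hmemu]
    intro n w hw
    cases n with
    | zero =>
      simp only [pow_zero, ContinuousLinearMap.one_apply]
      rw [inner_eq_zero_symm]
      exact Submodule.inner_right_of_mem_orthogonal (⟨x, rfl⟩ : V x ∈ LinearMap.range (V : H →ₗ[ℂ] H)) hw
    | succ m =>
      have : (V ^ (m + 1)) w = V ((V ^ m) w) := by
        rw [pow_succ']; rfl
      rw [this, ContinuousLinearMap.coe_coe, hinner]
      exact hx m w hw
  -- Sᗮ ⊆ V(Sᗮ)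
  have hmapu_ge : Sᗮ ≤ Submodule.map (V : H →ₗ[ℂ] H) Sᗮ := by
    intro x hx
    -- x is orthogonal to W = (range V)ᗮ, so x ∈ (range V)ᗮᗮ = range V
    have hxW : x ∈ Wᗮ := by
      rw [Submodule.mem_orthogonal]
      intro w hw
      have := (hmemu x).1 hx 0 w hw
      simpa using this
    have hxrange : x ∈ LinearMap.range (V : H →ₗ[ℂ] H) := by
      rw [hWdef] at hxW
      have : CompleteSpace (LinearMap.range (V : H →ₗ[ℂ] H) : Submodule ℂ H) :=
        hrangeclosed.completeSpace_coe
      rwa [Submodule.orthogonal_orthogonal] at hxW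
    obtain ⟨y, rfl⟩ := hxrange
    refine ⟨y, ?_, rfl⟩
    simp only [SetLike.mem_coe]
    rw [hmemu]
    intro n w hw
    have h1 : (inner ℂ ((V ^ (n + 1)) w) (V y) : ℂ) = 0 := (hmemu _).1 hx (n + 1) w hw
    have h2 : (V ^ (n + 1)) w = V ((V ^ n) w) := by rw [pow_succ']; rfl
    rw [h2, hinner] at h1
    exact h1
  -- V maps S into S
  have hmapS : Submodule.map (V : H →ₗ[ℂ] H) S ≤ S := by
    rintro _ ⟨s, hs, rfl⟩
    rw [hSdef] at hs
    -- use induction on the sup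
    revert s
    suffices h : S ≤ Submodule.comap (V : H →ₗ[ℂ] H) S by
      intro s hs
      exact h (by rwa [hSdef])
    rw [hSdef]
    apply iSup_le
    intro n
    rintro _ ⟨w, hw, rfl⟩
    simp only [Submodule.mem_comap, ContinuousLinearMap.coe_coe]
    have : V ((V ^ n) w) = (V ^ (n + 1)) w := by rw [pow_succ']; rfl
    rw [this]
    exact le_iSup (fun n => Submodule.map ((V ^ n : H →L[ℂ] H) : H →ₗ[ℂ] H) W) (n + 1) ⟨w, hw, rfl⟩
  -- V maps the closure of S into itself
  have hmapHs : Submodule.map (V : H →ₗ[ℂ] H) S.topologicalClosure ≤ S.topologicalClosure := by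
    calc Submodule.map (V : H →ₗ[ℂ] H) S.topologicalClosure
        ≤ (Submodule.map (V : H →ₗ[ℂ] H) S).topologicalClosure :=
          Submodule.topologicalClosure_map (V : H →L[ℂ] H) S
      _ ≤ S.topologicalClosure := Submodule.topologicalClosure_mono hmapS
  have hSorth : Sᗮᗮ = S.topologicalClosure := Submodule.orthogonal_orthogonal_eq_closure S
  refine ⟨(Sᗮ, Sᗮᗮ), ⟨S.isClosed_orthogonal, rfl, le_antisymm hmapu_le hmapu_ge, ?_, ?_⟩, ?_⟩
  · rw [hSorth]; exact hmapHs
  · rw [hSorth, hSdef]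
  · rintro ⟨p1, p2⟩ ⟨hc, horth, -, -, heq⟩
    have h2 : p2 = Sᗮᗮ := by rw [hSorth]; exact heq
    have h1 : p1 = Sᗮ := by
      have h0 : p1ᗮ = Sᗮᗮ := by rw [← horth]; exact h2
      have h3 : p1ᗮᗮ = Sᗮᗮᗮ := congrArg Submodule.orthogonal h0
      have e1 : p1ᗮᗮ = p1 := by
        rw [Submodule.orthogonal_orthogonal_eq_closure,
          hc.submodule_topologicalClosure_eq]
      have e2 : Sᗮᗮᗮ = Sᗮ := by
        rw [Submodule.orthogonal_orthogonal_eq_closure,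
          S.isClosed_orthogonal.submodule_topologicalClosure_eq]
      rw [e1, e2] at h3
      exact h3
    simp [h1, h2]
end

section
/- Let V₁, V₂ be doubly commuting isometries on a Hilbert space H. For m, n ∈ ℕ² define P(m) = V₁^{m₁}V₂^{m₂}(V₁^{m₁}V₂^{m₂})*. Then P(m)P(n) = P(m ∨ n), where m ∨ n denotes the coordinatewise maximum. -/
open ContinuousLinearMap

section Aux

variable {H : Type*} [NormedAddCommGroup H] [InnerProductSpace ℂ H] [CompleteSpace H]

private lemma star_mul_self_of_isom (V : H →L[ℂ] H) (h : ∀ x, ‖V x‖ = ‖x‖) :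
    star V * V = 1 := by
  ext x
  apply ext_inner_right ℂ
  intro y
  have : (star V * V) x = adjoint V (V x) := by
    simp [ContinuousLinearMap.mul_def, star_eq_adjoint]
  rw [this, adjoint_inner_left, ContinuousLinearMap.one_apply]
  exact LinearIsometry.inner_map_map ⟨(V : H →ₗ[ℂ] H), h⟩ x y

private lemma pow_star_mul_pow (V : H →L[ℂ] H) (h : star V * V = 1) :
    ∀ a : ℕ, (star V) ^ a * V ^ a = 1
  | 0 => by simp
  | (a + 1) => by
    rw [pow_succ, pow_succ', mul_assoc, ← mul_assoc (star V) V, h, one_mul,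
      pow_star_mul_pow V h a]

private lemma star_pow_mul_pow (V : H →L[ℂ] H) (h : star V * V = 1) (a c : ℕ) :
    (star V) ^ a * V ^ c = V ^ (c - a) * (star V) ^ (a - c) := by
  rcases le_total a c with hle | hle
  · obtain ⟨k, rfl⟩ := Nat.exists_eq_add_of_le hle
    have h1 : a + k - a = k := by omega
    have h2 : a - (a + k) = 0 := by omega
    rw [h1, h2, pow_zero, mul_one, pow_add, ← mul_assoc, pow_star_mul_pow V h, one_mul]
  · obtain ⟨k, rfl⟩ := Nat.exists_eq_add_of_le hle
    have h1 : c - (c + k) = 0 := by omega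
    have h2 : c + k - c = k := by omega
    rw [h1, h2, pow_zero, one_mul, add_comm c k, pow_add, mul_assoc,
      pow_star_mul_pow V h, mul_one]

end Aux

/-- For doubly commuting isometries, the projections
`P(m) = V₁^{m₁} V₂^{m₂} (V₁^{m₁} V₂^{m₂})*` satisfy `P(m) P(n) = P(m ∨ n)`. -/
theorem lattice_of_range_projections
    {H : Type*} [NormedAddCommGroup H] [InnerProductSpace ℂ H] [CompleteSpace H]
    (V₁ V₂ : H →L[ℂ] H)
    (h₁ : ∀ x, ‖V₁ x‖ = ‖x‖) (h₂ : ∀ x, ‖V₂ x‖ = ‖x‖)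
    (hcomm : V₁ ∘L V₂ = V₂ ∘L V₁)
    (hdc : adjoint V₂ ∘L V₁ = V₁ ∘L adjoint V₂)
    (P : ℕ × ℕ → (H →L[ℂ] H))
    (hP : ∀ m : ℕ × ℕ,
      P m = (V₁ ^ m.1 * V₂ ^ m.2) ∘L adjoint (V₁ ^ m.1 * V₂ ^ m.2)) :
    ∀ m n : ℕ × ℕ, P m ∘L P n = P (max m.1 n.1, max m.2 n.2) := by
  have hV1 : star V₁ * V₁ = 1 := star_mul_self_of_isom V₁ h₁
  have hV2 : star V₂ * V₂ = 1 := star_mul_self_of_isom V₂ h₂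
  have c12 : Commute V₁ V₂ := hcomm
  have cs21 : Commute (star V₂) V₁ := by
    show star V₂ * V₁ = V₁ * star V₂
    simpa [star_eq_adjoint, ContinuousLinearMap.mul_def] using hdc
  have cs12 : Commute (star V₁) V₂ := by
    show star V₁ * V₂ = V₂ * star V₁
    have := congrArg star cs21.eq
    simpa [star_mul, star_star] using this
  -- merging lemma
  have merge : ∀ a b e f : ℕ, (V₁ ^ a * V₂ ^ b) * (V₁ ^ e * V₂ ^ f)
      = V₁ ^ (a + e) * V₂ ^ (b + f) := by
    intro a b e f
    rw [pow_add, pow_add]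
    simp only [mul_assoc]
    rw [← mul_assoc (V₂ ^ b) (V₁ ^ e), (c12.symm.pow_pow b e).eq]
    simp only [mul_assoc]
  -- key lemma
  have key : ∀ a b c d : ℕ, star (V₁ ^ a * V₂ ^ b) * (V₁ ^ c * V₂ ^ d)
      = (V₁ ^ (c - a) * V₂ ^ (d - b)) * star (V₁ ^ (a - c) * V₂ ^ (b - d)) := by
    intro a b c d
    simp only [star_mul, star_pow]
    simp only [mul_assoc]
    rw [← mul_assoc ((star V₁) ^ a) (V₁ ^ c), star_pow_mul_pow V₁ hV1]
    simp only [mul_assoc]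
    rw [(cs12.pow_pow (a - c) d).eq]
    rw [← mul_assoc ((star V₂) ^ b) (V₁ ^ (c - a)), (cs21.pow_pow b (c - a)).eq]
    simp only [mul_assoc]
    rw [← mul_assoc ((star V₂) ^ b) (V₂ ^ d), star_pow_mul_pow V₂ hV2]
    simp only [mul_assoc]
  intro m n
  obtain ⟨a, b⟩ := m
  obtain ⟨c, d⟩ := n
  simp only [hP, ← ContinuousLinearMap.mul_def, ← star_eq_adjoint]
  have e1 : a + (c - a) = max a c := by omega
  have e2 : b + (d - b) = max b d := by omega
  have e3 : c + (a - c) = max a c := by omega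
  have e4 : d + (b - d) = max b d := by omega
  calc (V₁ ^ a * V₂ ^ b) * star (V₁ ^ a * V₂ ^ b) * ((V₁ ^ c * V₂ ^ d) * star (V₁ ^ c * V₂ ^ d))
      = (V₁ ^ a * V₂ ^ b) * (star (V₁ ^ a * V₂ ^ b) * (V₁ ^ c * V₂ ^ d)) * star (V₁ ^ c * V₂ ^ d) := by
        simp only [mul_assoc]
    _ = ((V₁ ^ a * V₂ ^ b) * (V₁ ^ (c - a) * V₂ ^ (d - b)))
        * (star (V₁ ^ (a - c) * V₂ ^ (b - d)) * star (V₁ ^ c * V₂ ^ d)) := by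
        rw [key]; simp only [mul_assoc]
    _ = (V₁ ^ max a c * V₂ ^ max b d) * star ((V₁ ^ c * V₂ ^ d) * (V₁ ^ (a - c) * V₂ ^ (b - d))) := by
        rw [merge, ← star_mul, e1, e2]
    _ = (V₁ ^ max a c * V₂ ^ max b d) * star (V₁ ^ max a c * V₂ ^ max b d) := by
        rw [merge, e3, e4]
end

section
/- Let V₁, V₂ be doubly commuting isometries on a Hilbert space H such that ⋂_{n≥0} V₁^n(H) = {0} and ⋂_{n≥0} V₂^n(H) = {0}. Then the pair (V₁, V₂) is unitarily equivalent to the pair of coordinate shifts (S₁ ⊗ I_W, S₂ ⊗ I_W) on ℓ²(ℕ²) ⊗ W, where W = (H ⊖ V₁H) ∩ (H ⊖ V₂H) is the wandering subspace. -/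
open ContinuousLinearMap
open scoped InnerProductSpace

section Helpers

variable {H : Type*} [NormedAddCommGroup H] [InnerProductSpace ℂ H] [CompleteSpace H]

/-- Membership in the orthogonal complement of the range is vanishing of the adjoint. -/
lemma dcs_mem_orth_iff (V : H →L[ℂ] H) (z : H) :
    z ∈ (LinearMap.range (V : H →ₗ[ℂ] H))ᗮ ↔ adjoint V z = 0 := by
  rw [Submodule.mem_orthogonal']
  constructor
  · intro h
    have h0 : ⟪adjoint V z, adjoint V z⟫_ℂ = 0 := by
      rw [adjoint_inner_left]
      exact h _ ⟨adjoint V z, rfl⟩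
    exact inner_self_eq_zero.mp h0
  · rintro h u ⟨y, rfl⟩
    rw [coe_coe, inner_eq_zero_symm, ← adjoint_inner_right, h, inner_zero_right]

/-- Pointwise inner-product invariance for powers of an isometry. -/
lemma dcs_inner_pow (V : H →L[ℂ] H) (hV : adjoint V ∘L V = 1) (m : ℕ) (a b : H) :
    ⟪(V ^ m) a, (V ^ m) b⟫_ℂ = ⟪a, b⟫_ℂ := by
  have hi : ∀ x y : H, ⟪V x, V y⟫_ℂ = ⟪x, y⟫_ℂ :=
    (inner_map_map_iff_adjoint_comp_self V).mpr hV
  induction m with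
  | zero => simp
  | succ m ih => rw [pow_succ', mul_apply_eq_comp, mul_apply_eq_comp, hi, ih]

/-- Purity: if the "defect" of every power vanishes on `z`, then `z = 0`. -/
lemma dcs_pure (V : H →L[ℂ] H) (hV : adjoint V ∘L V = 1)
    (hs : (⨅ n : ℕ, LinearMap.range ((V ^ n : H →L[ℂ] H) : H →ₗ[ℂ] H)) = ⊥) (z : H)
    (hz : ∀ m : ℕ, (1 - V ∘L adjoint V) ((adjoint V ^ m) z) = 0) : z = 0 := by
  have key : ∀ m : ℕ, (V ^ m) ((adjoint V ^ m) z) = z := by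
    intro m
    induction m with
    | zero => simp
    | succ m ih =>
      have h0 := hz m
      rw [sub_apply, one_apply_eq_self, comp_apply, sub_eq_zero] at h0
      rw [pow_succ V m, pow_succ' (adjoint V) m, mul_apply_eq_comp, mul_apply_eq_comp, ← h0, ih]
  have hmem : z ∈ (⨅ n : ℕ, LinearMap.range ((V ^ n : H →L[ℂ] H) : H →ₗ[ℂ] H)) := by
    rw [Submodule.mem_iInf]
    exact fun m => ⟨(adjoint V ^ m) z, key m⟩
  rw [hs] at hmem
  simpa using hmem

end Helpers

set_option maxHeartbeats 2000000 in
/-- A doubly commuting pair of shifts is unitarily equivalent to the pair of coordinate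
shifts on `ℓ²(ℕ²) ⊗ W ≅ ℓ²(ℕ², W)`, where `W = (H ⊖ V₁H) ∩ (H ⊖ V₂H)`. -/
theorem doubly_commuting_shifts_model
    {H : Type*} [NormedAddCommGroup H] [InnerProductSpace ℂ H] [CompleteSpace H]
    (V₁ V₂ : H →L[ℂ] H)
    (h₁ : ∀ x, ‖V₁ x‖ = ‖x‖) (h₂ : ∀ x, ‖V₂ x‖ = ‖x‖)
    (hcomm : V₁ ∘L V₂ = V₂ ∘L V₁)
    (hdc : adjoint V₂ ∘L V₁ = V₁ ∘L adjoint V₂)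
    (hs₁ : (⨅ n : ℕ, LinearMap.range ((V₁ ^ n : H →L[ℂ] H) : H →ₗ[ℂ] H)) = ⊥)
    (hs₂ : (⨅ n : ℕ, LinearMap.range ((V₂ ^ n : H →L[ℂ] H) : H →ₗ[ℂ] H)) = ⊥) :
    ∃ U : lp (fun _ : ℕ × ℕ =>
        (((LinearMap.range (V₁ : H →ₗ[ℂ] H))ᗮ ⊓ (LinearMap.range (V₂ : H →ₗ[ℂ] H))ᗮ : Submodule ℂ H))) 2 ≃ₗᵢ[ℂ] H,
      ∀ f, ∀ m : ℕ × ℕ,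
        (U.symm (V₁ (U f))) (m.1 + 1, m.2) = f m ∧
        (U.symm (V₁ (U f))) (0, m.2) = 0 ∧
        (U.symm (V₂ (U f))) (m.1, m.2 + 1) = f m ∧
        (U.symm (V₂ (U f))) (m.1, 0) = 0 := by
  classical
  have hAV : adjoint V₁ ∘L V₁ = 1 := (norm_map_iff_adjoint_comp_self V₁).mp h₁
  have hBV : adjoint V₂ ∘L V₂ = 1 := (norm_map_iff_adjoint_comp_self V₂).mp h₂
  have hAV' : adjoint V₁ * V₁ = 1 := hAV
  have hBV' : adjoint V₂ * V₂ = 1 := hBV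
  -- commutation relations
  have c12 : Commute V₁ V₂ := hcomm
  have cBV₁ : Commute (adjoint V₂) V₁ := hdc
  have cAV₂ : Commute (adjoint V₁) V₂ := by
    have h := congrArg adjoint hdc
    rw [adjoint_comp, adjoint_comp, adjoint_adjoint] at h
    exact h
  have cAB : Commute (adjoint V₁) (adjoint V₂) := by
    have h := congrArg adjoint hcomm
    rw [adjoint_comp, adjoint_comp] at h
    exact h.symm
  -- pointwise facts
  have hA1 : ∀ u, adjoint V₁ (V₁ u) = u := fun u => by
    have := ContinuousLinearMap.ext_iff.mp hAV u
    simpa using this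
  have hB1 : ∀ u, adjoint V₂ (V₂ u) = u := fun u => by
    have := ContinuousLinearMap.ext_iff.mp hBV u
    simpa using this
  have hadjp₁ : ∀ n : ℕ, adjoint (V₁ ^ n) = adjoint V₁ ^ n := fun n => by
    rw [← star_eq_adjoint, star_pow, star_eq_adjoint]
  have hadjp₂ : ∀ n : ℕ, adjoint (V₂ ^ n) = adjoint V₂ ^ n := fun n => by
    rw [← star_eq_adjoint, star_pow, star_eq_adjoint]
  -- the wandering subspace
  set W : Submodule ℂ H := (LinearMap.range (V₁ : H →ₗ[ℂ] H))ᗮ ⊓ (LinearMap.range (V₂ : H →ₗ[ℂ] H))ᗮ with hWdef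
  haveI : CompleteSpace W := by
    have hc : IsClosed (W : Set H) := by
      rw [hWdef, Submodule.coe_inf]
      exact (Submodule.isClosed_orthogonal _).inter (Submodule.isClosed_orthogonal _)
    exact hc.completeSpace_coe
  have hwA : ∀ w : W, adjoint V₁ (w : H) = 0 := fun w =>
    (dcs_mem_orth_iff V₁ _).mp w.2.1
  have hwB : ∀ w : W, adjoint V₂ (w : H) = 0 := fun w =>
    (dcs_mem_orth_iff V₂ _).mp w.2.2
  -- norms of the model maps
  have hp₁ : ∀ (m : ℕ) (x : H), ‖(V₁ ^ m) x‖ = ‖x‖ := by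
    intro m
    induction m with
    | zero => intro x; simp
    | succ m ih => intro x; rw [pow_succ', mul_apply_eq_comp, h₁, ih]
  have hp₂ : ∀ (m : ℕ) (x : H), ‖(V₂ ^ m) x‖ = ‖x‖ := by
    intro m
    induction m with
    | zero => intro x; simp
    | succ m ih => intro x; rw [pow_succ', mul_apply_eq_comp, h₂, ih]
  -- the family of isometries
  let Φ : ℕ × ℕ → W →ₗᵢ[ℂ] H := fun mn =>
    { toLinearMap := (((V₁ ^ mn.1) ∘L (V₂ ^ mn.2) : H →L[ℂ] H) : H →ₗ[ℂ] H) ∘ₗ W.subtype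
      norm_map' := fun w => by simp only [LinearMap.comp_apply, Submodule.subtype_apply, coe_coe, comp_apply, hp₁, hp₂, Submodule.coe_norm] }
  have hΦ : ∀ (mn : ℕ × ℕ) (w : W), Φ mn w = (V₁ ^ mn.1) ((V₂ ^ mn.2) (w : H)) :=
    fun _ _ => rfl
  -- inner-product reductions
  have red₁ : ∀ (m : ℕ) (a b : H), ⟪(V₁ ^ m) a, (V₁ ^ m) b⟫_ℂ = ⟪a, b⟫_ℂ :=
    dcs_inner_pow V₁ hAV
  have red₂ : ∀ (m : ℕ) (a b : H), ⟪(V₂ ^ m) a, (V₂ ^ m) b⟫_ℂ = ⟪a, b⟫_ℂ :=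
    dcs_inner_pow V₂ hBV
  have key₁ : ∀ (v z : H), adjoint V₁ v = 0 → ∀ (k n : ℕ),
      ⟪(V₂ ^ n) v, (V₁ ^ (k + 1)) z⟫_ℂ = 0 := by
    intro v z hv k n
    rw [inner_eq_zero_symm, ← adjoint_inner_right, hadjp₁]
    have hc : (adjoint V₁ ^ (k + 1)) ((V₂ ^ n) v)
        = (V₂ ^ n) ((adjoint V₁ ^ (k + 1)) v) := by
      have := (cAV₂.pow_pow (k + 1) n).symm
      calc (adjoint V₁ ^ (k + 1)) ((V₂ ^ n) v)
          = ((adjoint V₁ ^ (k + 1)) * (V₂ ^ n)) v := rfl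
        _ = ((V₂ ^ n) * (adjoint V₁ ^ (k + 1))) v := by rw [cAV₂.pow_pow]
        _ = (V₂ ^ n) ((adjoint V₁ ^ (k + 1)) v) := rfl
    rw [hc, pow_succ, mul_apply_eq_comp, hv, map_zero, map_zero, inner_zero_right]
  have key₂ : ∀ (v z : H), adjoint V₂ v = 0 → ∀ (k : ℕ),
      ⟪v, (V₂ ^ (k + 1)) z⟫_ℂ = 0 := by
    intro v z hv k
    rw [inner_eq_zero_symm, ← adjoint_inner_right, hadjp₂, pow_succ, mul_apply_eq_comp, hv,
      map_zero, inner_zero_right]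
  -- orthogonality of the family
  have hmain : ∀ (m n m' n' : ℕ) (v w : W), (m, n) ≠ (m', n') → m ≤ m' →
      ⟪(Φ (m, n)) v, (Φ (m', n')) w⟫_ℂ = 0 := by
    intro m n m' n' v w hne hle
    rw [hΦ, hΦ]
    rcases lt_or_eq_of_le hle with hlt | rfl
    · obtain ⟨k, rfl⟩ : ∃ k, m' = m + (k + 1) := ⟨m' - m - 1, by omega⟩
      have hsplit : (V₁ ^ (m + (k + 1))) ((V₂ ^ n') (w : H))
          = (V₁ ^ m) ((V₁ ^ (k + 1)) ((V₂ ^ n') (w : H))) := by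
        rw [pow_add]; rfl
      rw [hsplit, red₁]
      exact key₁ v _ (hwA v) k n
    · have hnn : n ≠ n' := by simpa using hne
      rcases lt_trichotomy n n' with h | h | h
      · obtain ⟨k, rfl⟩ : ∃ k, n' = n + (k + 1) := ⟨n' - n - 1, by omega⟩
        have hsplit : (V₂ ^ (n + (k + 1))) (w : H)
            = (V₂ ^ n) ((V₂ ^ (k + 1)) (w : H)) := by
          rw [pow_add]; rfl
        rw [hsplit, red₁, red₂]
        exact key₂ v _ (hwB v) k
      · exact absurd h hnn
      · obtain ⟨k, rfl⟩ : ∃ k, n = n' + (k + 1) := ⟨n - n' - 1, by omega⟩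
        rw [inner_eq_zero_symm]
        have hsplit : (V₂ ^ (n' + (k + 1))) (v : H)
            = (V₂ ^ n') ((V₂ ^ (k + 1)) (v : H)) := by
          rw [pow_add]; rfl
        rw [hsplit, red₁, red₂]
        exact key₂ w _ (hwB w) k
  have hortho : OrthogonalFamily ℂ (fun _ : ℕ × ℕ => W) Φ := by
    rintro ⟨m, n⟩ ⟨m', n'⟩ hne v w
    rcases le_total m m' with hle | hle
    · exact hmain m n m' n' v w hne hle
    · rw [inner_eq_zero_symm]
      exact hmain m' n' m n w v (by simpa using hne.symm) hle
  -- inner invariance, single step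
  have hi₁ : ∀ a b : H, ⟪V₁ a, V₁ b⟫_ℂ = ⟪a, b⟫_ℂ :=
    (inner_map_map_iff_adjoint_comp_self V₁).mpr hAV
  -- pointwise commutations with powers
  have hcpowA : ∀ (n : ℕ) (u : H), adjoint V₁ ((V₂ ^ n) u) = (V₂ ^ n) (adjoint V₁ u) := by
    intro n u
    have h := (cAV₂.pow_right n).eq
    calc adjoint V₁ ((V₂ ^ n) u) = (adjoint V₁ * V₂ ^ n) u := rfl
      _ = (V₂ ^ n * adjoint V₁) u := by rw [h]
      _ = (V₂ ^ n) (adjoint V₁ u) := rfl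
  have hcpowB : ∀ (n : ℕ) (u : H), adjoint V₂ ((V₁ ^ n) u) = (V₁ ^ n) (adjoint V₂ u) := by
    intro n u
    have h := (cBV₁.pow_right n).eq
    calc adjoint V₂ ((V₁ ^ n) u) = (adjoint V₂ * V₁ ^ n) u := rfl
      _ = (V₁ ^ n * adjoint V₂) u := by rw [h]
      _ = (V₁ ^ n) (adjoint V₂ u) := rfl
  -- the defect projections
  set P₁ : H →L[ℂ] H := 1 - V₁ * adjoint V₁ with hP₁def
  set P₂ : H →L[ℂ] H := 1 - V₂ * adjoint V₂ with hP₂def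
  have hAP₁ : adjoint V₁ * P₁ = 0 := by
    rw [hP₁def, mul_sub, mul_one, ← mul_assoc, hAV', one_mul, sub_self]
  have hBP₂ : adjoint V₂ * P₂ = 0 := by
    rw [hP₂def, mul_sub, mul_one, ← mul_assoc, hBV', one_mul, sub_self]
  have cV₂P₁ : Commute V₂ P₁ :=
    (Commute.one_right V₂).sub_right (c12.symm.mul_right cAV₂.symm)
  have cBP₁ : Commute (adjoint V₂) P₁ :=
    (Commute.one_right _).sub_right (cBV₁.mul_right cAB.symm)
  have cAP₂ : Commute (adjoint V₁) P₂ :=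
    (Commute.one_right _).sub_right (cAV₂.mul_right cAB)
  have cP₁P₂ : Commute P₁ P₂ :=
    (Commute.one_right P₁).sub_right (cV₂P₁.symm.mul_right cBP₁.symm)
  have hvav : (V₁ * adjoint V₁) * (V₁ * adjoint V₁) = V₁ * adjoint V₁ := by
    rw [mul_assoc, ← mul_assoc (adjoint V₁) V₁ (adjoint V₁), hAV', one_mul]
  have hvbv : (V₂ * adjoint V₂) * (V₂ * adjoint V₂) = V₂ * adjoint V₂ := by
    rw [mul_assoc, ← mul_assoc (adjoint V₂) V₂ (adjoint V₂), hBV', one_mul]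
  have hP₁idem : P₁ * P₁ = P₁ := by
    rw [hP₁def, sub_mul, one_mul, mul_sub, mul_one, hvav, sub_self, sub_zero]
  have hP₂idem : P₂ * P₂ = P₂ := by
    rw [hP₂def, sub_mul, one_mul, mul_sub, mul_one, hvbv, sub_self, sub_zero]
  have hEidem : (P₁ * P₂) * (P₁ * P₂) = P₁ * P₂ := by
    calc (P₁ * P₂) * (P₁ * P₂) = P₁ * (P₂ * (P₁ * P₂)) := by rw [mul_assoc]
      _ = P₁ * ((P₂ * P₁) * P₂) := by rw [mul_assoc]
      _ = P₁ * ((P₁ * P₂) * P₂) := by rw [← cP₁P₂.eq]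
      _ = P₁ * (P₁ * (P₂ * P₂)) := by rw [mul_assoc]
      _ = P₁ * (P₁ * P₂) := by rw [hP₂idem]
      _ = (P₁ * P₁) * P₂ := by rw [mul_assoc]
      _ = P₁ * P₂ := by rw [hP₁idem]
  have hstarE : adjoint (P₁ * P₂) = P₁ * P₂ := by
    have hstar₁ : star P₁ = P₁ := by
      rw [hP₁def, star_sub, star_one, star_mul, star_eq_adjoint, star_eq_adjoint,
        adjoint_adjoint]
    have hstar₂ : star P₂ = P₂ := by
      rw [hP₂def, star_sub, star_one, star_mul, star_eq_adjoint, star_eq_adjoint,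
        adjoint_adjoint]
    rw [← star_eq_adjoint, star_mul, hstar₁, hstar₂, ← cP₁P₂.eq]
  have hEW : ∀ y : H, (P₁ * P₂) y ∈ W := by
    intro y
    refine Submodule.mem_inf.mpr ⟨(dcs_mem_orth_iff V₁ _).mpr ?_, (dcs_mem_orth_iff V₂ _).mpr ?_⟩
    · have h0 : adjoint V₁ * (P₁ * P₂) = 0 := by rw [← mul_assoc, hAP₁, zero_mul]
      calc adjoint V₁ ((P₁ * P₂) y) = (adjoint V₁ * (P₁ * P₂)) y := rfl
        _ = 0 := by rw [h0]; rfl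
    · have h0 : adjoint V₂ * (P₁ * P₂) = 0 := by
        rw [← mul_assoc, cBP₁.eq, mul_assoc, hBP₂, mul_zero]
      calc adjoint V₂ ((P₁ * P₂) y) = (adjoint V₂ * (P₁ * P₂)) y := rfl
        _ = 0 := by rw [h0]; rfl
  have hE0 : ∀ y : H, (∀ w : W, ⟪(w : H), y⟫_ℂ = 0) → (P₁ * P₂) y = 0 := by
    intro y hy
    have h1 : (P₁ * P₂) ((P₁ * P₂) y) = (P₁ * P₂) y := by
      rw [← mul_apply_eq_comp, hEidem]
    have h0 : ⟪(P₁ * P₂) y, (P₁ * P₂) y⟫_ℂ = 0 := by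
      calc ⟪(P₁ * P₂) y, (P₁ * P₂) y⟫_ℂ
          = ⟪(P₁ * P₂) y, adjoint (P₁ * P₂) y⟫_ℂ := by rw [hstarE]
        _ = ⟪(P₁ * P₂) ((P₁ * P₂) y), y⟫_ℂ := adjoint_inner_right _ _ _
        _ = ⟪(P₁ * P₂) y, y⟫_ℂ := by rw [h1]
        _ = 0 := hy ⟨(P₁ * P₂) y, hEW y⟩
    exact inner_self_eq_zero.mp h0
  -- totality of the family
  have htotal : ⊤ ≤ (⨆ mn : ℕ × ℕ, LinearMap.range (Φ mn).toLinearMap).topologicalClosure := by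
    have horth : (⨆ mn : ℕ × ℕ, LinearMap.range (Φ mn).toLinearMap)ᗮ = ⊥ := by
      rw [Submodule.eq_bot_iff]
      intro x hx
      have hxw : ∀ (mn : ℕ × ℕ) (w : W), ⟪(V₁ ^ mn.1) ((V₂ ^ mn.2) (w : H)), x⟫_ℂ = 0 := by
        intro mn w
        have hm : (Φ mn) w ∈ ⨆ mn : ℕ × ℕ, LinearMap.range (Φ mn).toLinearMap :=
          Submodule.mem_iSup_of_mem mn ⟨w, rfl⟩
        have h := Submodule.inner_right_of_mem_orthogonal hm hx
        rwa [hΦ] at h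
      have step1 : ∀ m n : ℕ, (P₁ * P₂) ((adjoint V₂ ^ n) ((adjoint V₁ ^ m) x)) = 0 := by
        intro m n
        apply hE0
        intro w
        rw [← hadjp₂, adjoint_inner_right, ← hadjp₁, adjoint_inner_right]
        exact hxw (m, n) w
      have step2 : ∀ n : ℕ, P₂ ((adjoint V₂ ^ n) x) = 0 := by
        intro n
        have hz : ∀ m : ℕ,
            (1 - V₁ ∘L adjoint V₁) ((adjoint V₁ ^ m) (P₂ ((adjoint V₂ ^ n) x))) = 0 := by
          intro m
          have hc1 : (adjoint V₁ ^ m) (P₂ ((adjoint V₂ ^ n) x))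
              = P₂ ((adjoint V₂ ^ n) ((adjoint V₁ ^ m) x)) := by
            calc (adjoint V₁ ^ m) (P₂ ((adjoint V₂ ^ n) x))
                = ((adjoint V₁ ^ m) * P₂) ((adjoint V₂ ^ n) x) := rfl
              _ = (P₂ * (adjoint V₁ ^ m)) ((adjoint V₂ ^ n) x) := by
                  rw [(cAP₂.pow_left m).eq]
              _ = P₂ (((adjoint V₁ ^ m) * (adjoint V₂ ^ n)) x) := rfl
              _ = P₂ (((adjoint V₂ ^ n) * (adjoint V₁ ^ m)) x) := by
                  rw [(cAB.pow_pow m n).eq]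
              _ = P₂ ((adjoint V₂ ^ n) ((adjoint V₁ ^ m) x)) := rfl
          have hP : (1 - V₁ ∘L adjoint V₁) = P₁ := rfl
          rw [hP, hc1]
          calc P₁ (P₂ ((adjoint V₂ ^ n) ((adjoint V₁ ^ m) x)))
              = (P₁ * P₂) ((adjoint V₂ ^ n) ((adjoint V₁ ^ m) x)) := rfl
            _ = 0 := step1 m n
        exact dcs_pure V₁ hAV hs₁ _ hz
      exact dcs_pure V₂ hBV hs₂ x (fun n => step2 n)
    have hcl := Submodule.orthogonal_orthogonal_eq_closure
        (K := ⨆ mn : ℕ × ℕ, LinearMap.range (Φ mn).toLinearMap)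
    rw [horth, Submodule.bot_orthogonal_eq_top] at hcl
    exact hcl.le
  -- the Hilbert sum structure
  have hsum : IsHilbertSum ℂ (fun _ : ℕ × ℕ => W) Φ := IsHilbertSum.mk hortho htotal
  have hcoord : ∀ (y : H) (i : ℕ × ℕ) (w : W),
      ⟪(hsum.linearIsometryEquiv y) i, w⟫_ℂ = ⟪y, ((Φ i) w : H)⟫_ℂ := by
    intro y i w
    rw [← lp.inner_single_right, ← LinearIsometryEquiv.inner_map_map
      hsum.linearIsometryEquiv.symm, LinearIsometryEquiv.symm_apply_apply,
      hsum.linearIsometryEquiv_symm_apply_single]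
  refine ⟨hsum.linearIsometryEquiv.symm, ?_⟩
  intro f m
  rw [LinearIsometryEquiv.symm_symm]
  have hr : ∀ w : W, ⟪f m, w⟫_ℂ
      = ⟪hsum.linearIsometryEquiv.symm f, ((Φ m) w : H)⟫_ℂ := by
    intro w
    conv_lhs => rw [← LinearIsometryEquiv.apply_symm_apply hsum.linearIsometryEquiv f]
    exact hcoord _ m w
  refine ⟨?_, ?_, ?_, ?_⟩
  · apply ext_inner_right ℂ
    intro w
    rw [hcoord, hr, hΦ, hΦ, pow_succ', mul_apply_eq_comp, hi₁]
  · apply ext_inner_right ℂ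
    intro w
    rw [hcoord, inner_zero_left, hΦ, pow_zero, one_apply_eq_self, ← adjoint_inner_right,
      hcpowA, hwA w, map_zero, inner_zero_right]
  · apply ext_inner_right ℂ
    intro w
    rw [hcoord, hr, hΦ, hΦ, ← adjoint_inner_right, hcpowB, pow_succ', mul_apply_eq_comp, hB1]
  · apply ext_inner_right ℂ
    intro w
    rw [hcoord, inner_zero_left, hΦ, pow_zero, one_apply_eq_self, ← adjoint_inner_right,
      hcpowB, hwB w, map_zero, inner_zero_right]
end

section
/- Let V₁, V₂ be doubly commuting isometries on a Hilbert space H. The projection P_∞ onto ⋂_{(m,n)∈ℕ²} V₁^m V₂^n (H) satisfies V_i P_∞ V_i* = P_∞ for i = 1, 2, and P_∞ H is the unique maximal subspace reducing both isometries on which both restrictions are unitary. -/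
open ContinuousLinearMap

section Aux

variable {H : Type*} [NormedAddCommGroup H] [InnerProductSpace ℂ H] [CompleteSpace H]

local notation "⟪" x ", " y "⟫" => @inner ℂ _ _ x y

/-- A self-adjoint idempotent equals the orthogonal projection onto its range. -/
lemma aux_proj_eq (Q : H →L[ℂ] H) (hsa : IsSelfAdjoint Q) (hidem : Q ∘L Q = Q)
    (M : Submodule ℂ H) [M.HasOrthogonalProjection] (hr : LinearMap.range (Q : H →ₗ[ℂ] H) = M) :
    Q = M.subtypeL ∘L M.orthogonalProjectionOnto := by
  have hfix : ∀ m ∈ M, Q m = m := by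
    intro m hm
    rw [← hr] at hm
    obtain ⟨y, rfl⟩ := hm
    have := DFunLike.congr_fun hidem y
    simpa using this
  have hker : ∀ z ∈ Mᗮ, Q z = 0 := by
    intro z hz
    apply ext_inner_right ℂ
    intro w
    have h1 : ⟪Q z, w⟫ = ⟪z, Q w⟫ := by
      calc ⟪Q z, w⟫ = ⟪z, adjoint Q w⟫ := (ContinuousLinearMap.adjoint_inner_right Q z w).symm
        _ = ⟪z, Q w⟫ := by rw [hsa.adjoint_eq]
    rw [h1, inner_zero_left]
    have hQw : Q w ∈ M := hr ▸ LinearMap.mem_range_self (Q : H →ₗ[ℂ] H) w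
    exact (Submodule.mem_orthogonal' M z).mp hz _ hQw
  ext x
  have hx : x = (M.orthogonalProjectionOnto x : H) + (x - M.orthogonalProjectionOnto x) := by abel
  have hmem : (M.orthogonalProjectionOnto x : H) ∈ M := (M.orthogonalProjectionOnto x).2
  have hperp : x - M.orthogonalProjectionOnto x ∈ Mᗮ := by exact Submodule.sub_starProjection_mem_orthogonal x
  calc Q x = Q ((M.orthogonalProjectionOnto x : H) + (x - M.orthogonalProjectionOnto x)) := by rw [← hx]
    _ = Q (M.orthogonalProjectionOnto x : H) + Q (x - M.orthogonalProjectionOnto x) := map_add _ _ _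
    _ = (M.orthogonalProjectionOnto x : H) + 0 := by rw [hfix _ hmem, hker _ hperp]
    _ = (M.subtypeL ∘L M.orthogonalProjectionOnto) x := by simp

end Aux

/-- The projection onto `⋂_{m,n} V₁^m V₂^n(H)` is invariant under conjugation by the
isometries, and its range is the unique maximal reducing subspace on which both
restrictions are unitary. -/
theorem maximal_unitary_part
    {H : Type*} [NormedAddCommGroup H] [InnerProductSpace ℂ H] [CompleteSpace H]
    (V₁ V₂ : H →L[ℂ] H)
    (h₁ : ∀ x, ‖V₁ x‖ = ‖x‖) (h₂ : ∀ x, ‖V₂ x‖ = ‖x‖)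
    (hcomm : V₁ ∘L V₂ = V₂ ∘L V₁)
    (hdc : adjoint V₂ ∘L V₁ = V₁ ∘L adjoint V₂) :
    ∃ P : H →L[ℂ] H,
      IsSelfAdjoint P ∧ P ∘L P = P ∧
      LinearMap.range (P : H →ₗ[ℂ] H) = (⨅ p : ℕ × ℕ, LinearMap.range ((V₁ ^ p.1 * V₂ ^ p.2 : H →L[ℂ] H) : H →ₗ[ℂ] H)) ∧
      V₁ ∘L P ∘L adjoint V₁ = P ∧
      V₂ ∘L P ∘L adjoint V₂ = P ∧
      -- the range reduces both isometries and both restrictions are unitary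
      (Submodule.map (V₁ : H →ₗ[ℂ] H) (LinearMap.range (P : H →ₗ[ℂ] H)) = LinearMap.range (P : H →ₗ[ℂ] H)) ∧
      (Submodule.map (V₂ : H →ₗ[ℂ] H) (LinearMap.range (P : H →ₗ[ℂ] H)) = LinearMap.range (P : H →ₗ[ℂ] H)) ∧
      (Submodule.map (V₁ : H →ₗ[ℂ] H) (LinearMap.range (P : H →ₗ[ℂ] H))ᗮ ≤ (LinearMap.range (P : H →ₗ[ℂ] H))ᗮ) ∧
      (Submodule.map (V₂ : H →ₗ[ℂ] H) (LinearMap.range (P : H →ₗ[ℂ] H))ᗮ ≤ (LinearMap.range (P : H →ₗ[ℂ] H))ᗮ) ∧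
      -- maximality
      (∀ K : Submodule ℂ H,
        Submodule.map (V₁ : H →ₗ[ℂ] H) Kᗮ ≤ Kᗮ → Submodule.map (V₂ : H →ₗ[ℂ] H) Kᗮ ≤ Kᗮ →
        Submodule.map (V₁ : H →ₗ[ℂ] H) K = K → Submodule.map (V₂ : H →ₗ[ℂ] H) K = K →
        K ≤ LinearMap.range (P : H →ₗ[ℂ] H)) := by
  classical
  -- basic facts
  have hc : Commute V₁ V₂ := hcomm
  -- isometry of powers
  have hpow1 : ∀ (m : ℕ) (x : H), ‖(V₁ ^ m) x‖ = ‖x‖ := by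
    intro m
    induction m with
    | zero => intro x; simp
    | succ k ih => intro x; rw [pow_succ, ContinuousLinearMap.mul_apply, ih, h₁]
  have hpow2 : ∀ (n : ℕ) (x : H), ‖(V₂ ^ n) x‖ = ‖x‖ := by
    intro n
    induction n with
    | zero => intro x; simp
    | succ k ih => intro x; rw [pow_succ, ContinuousLinearMap.mul_apply, ih, h₂]
  have hiso : ∀ (p : ℕ × ℕ) (x : H), ‖(V₁ ^ p.1 * V₂ ^ p.2) x‖ = ‖x‖ := by
    intro p x
    rw [ContinuousLinearMap.mul_apply, hpow1, hpow2]
  set M : Submodule ℂ H := ⨅ p : ℕ × ℕ, LinearMap.range (((V₁ ^ p.1 * V₂ ^ p.2) : H →L[ℂ] H) : H →ₗ[ℂ] H) with hM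
  have hmemM : ∀ x : H, x ∈ M ↔ ∀ p : ℕ × ℕ, x ∈ LinearMap.range (((V₁ ^ p.1 * V₂ ^ p.2) : H →L[ℂ] H) : H →ₗ[ℂ] H) := by
    intro x; exact Submodule.mem_iInf _
  -- M is closed
  have hclosed : IsClosed (M : Set H) := by
    rw [hM, Submodule.coe_iInf]
    refine isClosed_iInter fun p => ?_
    have : Isometry ((V₁ ^ p.1 * V₂ ^ p.2) : H → H) :=
      AddMonoidHomClass.isometry_of_norm _ (hiso p)
    exact this.isClosedEmbedding.isClosed_range
  haveI : CompleteSpace M := hclosed.completeSpace_coe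
  -- inner product preservation
  set L₁ : H →ₗᵢ[ℂ] H := ⟨V₁.toLinearMap, h₁⟩ with hL₁
  set L₂ : H →ₗᵢ[ℂ] H := ⟨V₂.toLinearMap, h₂⟩ with hL₂
  have hinner1 : ∀ x y : H, (inner ℂ (V₁ x) (V₁ y) : ℂ) = inner ℂ x y := fun x y =>
    L₁.inner_map_map x y
  have hinner2 : ∀ x y : H, (inner ℂ (V₂ x) (V₂ y) : ℂ) = inner ℂ x y := fun x y =>
    L₂.inner_map_map x y
  have hinj1 : Function.Injective V₁ := L₁.injective
  have hinj2 : Function.Injective V₂ := L₂.injective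
  have hadj1 : ∀ x : H, adjoint V₁ (V₁ x) = x := by
    intro x
    apply ext_inner_right ℂ
    intro y
    rw [ContinuousLinearMap.adjoint_inner_left, hinner1]
  have hadj2 : ∀ x : H, adjoint V₂ (V₂ x) = x := by
    intro x
    apply ext_inner_right ℂ
    intro y
    rw [ContinuousLinearMap.adjoint_inner_left, hinner2]
  -- V₁ M = M, V₂ M = M
  have hmap1 : Submodule.map ((V₁ : H →L[ℂ] H) : H →ₗ[ℂ] H) M = M := by
    apply le_antisymm
    · rintro _ ⟨x, hx, rfl⟩
      refine (hmemM _).mpr ?_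
      rintro ⟨m, n⟩
      obtain ⟨z, hz⟩ := (hmemM x).mp hx (m, n)
      refine ⟨V₁ z, ?_⟩
      have key : (V₁ ^ m * V₂ ^ n) * V₁ = V₁ * (V₁ ^ m * V₂ ^ n) :=
        (((Commute.refl V₁).pow_right m).mul_right (hc.pow_right n)).eq.symm
      calc (V₁ ^ m * V₂ ^ n) (V₁ z) = ((V₁ ^ m * V₂ ^ n) * V₁) z := rfl
        _ = (V₁ * (V₁ ^ m * V₂ ^ n)) z := by rw [key]
        _ = V₁ ((V₁ ^ m * V₂ ^ n) z) := rfl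
        _ = V₁ x := congrArg V₁ hz
    · intro x hx
      have hx1 : x ∈ LinearMap.range (((V₁ ^ 1 * V₂ ^ 0) : H →L[ℂ] H) : H →ₗ[ℂ] H) := (hmemM x).mp hx (1, 0)
      obtain ⟨y, hy⟩ := hx1
      simp only [pow_one, pow_zero, mul_one] at hy
      refine ⟨y, (hmemM y).mpr ?_, hy⟩
      rintro ⟨m, n⟩
      obtain ⟨z, hz⟩ := (hmemM x).mp hx (m + 1, n)
      refine ⟨z, hinj1 ?_⟩
      rw [show V₁ y = x from hy, ← hz]
      have key : V₁ ^ (m + 1) * V₂ ^ n = V₁ * (V₁ ^ m * V₂ ^ n) := by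
        rw [pow_succ' V₁ m, mul_assoc]
      show V₁ ((V₁ ^ m * V₂ ^ n) z) = (V₁ ^ (m + 1) * V₂ ^ n) z
      rw [key]; rfl
  have hmap2 : Submodule.map ((V₂ : H →L[ℂ] H) : H →ₗ[ℂ] H) M = M := by
    apply le_antisymm
    · rintro _ ⟨x, hx, rfl⟩
      refine (hmemM _).mpr ?_
      rintro ⟨m, n⟩
      obtain ⟨z, hz⟩ := (hmemM x).mp hx (m, n)
      refine ⟨V₂ z, ?_⟩
      have key : (V₁ ^ m * V₂ ^ n) * V₂ = V₂ * (V₁ ^ m * V₂ ^ n) :=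
        ((hc.symm.pow_right m).mul_right ((Commute.refl V₂).pow_right n)).eq.symm
      calc (V₁ ^ m * V₂ ^ n) (V₂ z) = ((V₁ ^ m * V₂ ^ n) * V₂) z := rfl
        _ = (V₂ * (V₁ ^ m * V₂ ^ n)) z := by rw [key]
        _ = V₂ ((V₁ ^ m * V₂ ^ n) z) := rfl
        _ = V₂ x := congrArg V₂ hz
    · intro x hx
      have hx1 : x ∈ LinearMap.range (((V₁ ^ 0 * V₂ ^ 1) : H →L[ℂ] H) : H →ₗ[ℂ] H) := (hmemM x).mp hx (0, 1)
      obtain ⟨y, hy⟩ := hx1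
      simp only [pow_one, pow_zero, one_mul] at hy
      refine ⟨y, (hmemM y).mpr ?_, hy⟩
      rintro ⟨m, n⟩
      obtain ⟨z, hz⟩ := (hmemM x).mp hx (m, n + 1)
      refine ⟨z, hinj2 ?_⟩
      rw [show V₂ y = x from hy, ← hz]
      have key : V₁ ^ m * V₂ ^ (n + 1) = V₂ * (V₁ ^ m * V₂ ^ n) := by
        rw [pow_succ' V₂ n, ← mul_assoc, ← (hc.symm.pow_right m).eq, mul_assoc]
      show V₂ ((V₁ ^ m * V₂ ^ n) z) = (V₁ ^ m * V₂ ^ (n + 1)) z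
      rw [key]; rfl
  -- the projection
  set P : H →L[ℂ] H := M.subtypeL ∘L M.orthogonalProjectionOnto with hP
  have hPmem : ∀ x : H, P x ∈ M := fun x => (M.orthogonalProjectionOnto x).2
  have hPfix : ∀ m ∈ M, P m = m := by
    intro m hm
    show M.starProjection m = m
    exact Submodule.starProjection_eq_self_iff.mpr hm
  have hPrange : LinearMap.range ((P : H →L[ℂ] H) : H →ₗ[ℂ] H) = M := by
    apply le_antisymm
    · rintro _ ⟨x, rfl⟩; exact hPmem x
    · intro m hm; exact ⟨m, hPfix m hm⟩
  have hPsa : IsSelfAdjoint P := by exact isSelfAdjoint_starProjection M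
  have hPidem : P ∘L P = P := by
    ext x
    exact hPfix (P x) (hPmem x)
  -- conjugation invariance
  have hconj : ∀ (V : H →L[ℂ] H), (∀ x : H, adjoint V (V x) = x) →
      Submodule.map ((V : H →L[ℂ] H) : H →ₗ[ℂ] H) M = M → V ∘L P ∘L adjoint V = P := by
    intro V hadj hmap
    set Q : H →L[ℂ] H := V ∘L P ∘L adjoint V with hQ
    have hQsa : IsSelfAdjoint Q := by
      rw [hQ]
      simp only [IsSelfAdjoint, ContinuousLinearMap.star_eq_adjoint,
        ContinuousLinearMap.adjoint_comp, ContinuousLinearMap.adjoint_adjoint,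
        hPsa.adjoint_eq, ContinuousLinearMap.comp_assoc]
    have hQidem : Q ∘L Q = Q := by
      ext x
      show V (P (adjoint V (V (P (adjoint V x))))) = V (P (adjoint V x))
      rw [hadj, hPfix (P (adjoint V x)) (hPmem _)]
    have hQrange : LinearMap.range ((Q : H →L[ℂ] H) : H →ₗ[ℂ] H) = M := by
      apply le_antisymm
      · rintro _ ⟨x, rfl⟩
        show V (P (adjoint V x)) ∈ M
        rw [← hmap]
        exact ⟨P (adjoint V x), hPmem _, rfl⟩
      · intro m hm
        rw [← hmap] at hm
        obtain ⟨m', hm', rfl⟩ := hm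
        refine ⟨V m', ?_⟩
        show V (P (adjoint V (V m'))) = V m'
        rw [hadj, hPfix m' hm']
    rw [hQ] at *
    rw [aux_proj_eq _ hQsa hQidem M hQrange]
  -- orthogonal complement invariance
  have hperp : ∀ (V : H →L[ℂ] H), (∀ x y : H, (inner ℂ (V x) (V y) : ℂ) = inner ℂ x y) →
      Submodule.map ((V : H →L[ℂ] H) : H →ₗ[ℂ] H) M = M → Submodule.map ((V : H →L[ℂ] H) : H →ₗ[ℂ] H) Mᗮ ≤ Mᗮ := by
    intro V hinner hmap
    rintro _ ⟨w, hw, rfl⟩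
    rw [Submodule.mem_orthogonal]
    intro u hu
    rw [← hmap] at hu
    obtain ⟨u', hu', rfl⟩ := hu
    refine (hinner u' w).trans ?_
    exact (Submodule.mem_orthogonal M w).mp hw u' hu'
  -- maximality
  have hmax : ∀ K : Submodule ℂ H,
      Submodule.map ((V₁ : H →L[ℂ] H) : H →ₗ[ℂ] H) K = K → Submodule.map ((V₂ : H →L[ℂ] H) : H →ₗ[ℂ] H) K = K → K ≤ M := by
    intro K hK1 hK2
    have hmapmul : ∀ (f g : H →L[ℂ] H) (S : Submodule ℂ H),
        Submodule.map (((f * g) : H →L[ℂ] H) : H →ₗ[ℂ] H) S = Submodule.map ((f : H →L[ℂ] H) : H →ₗ[ℂ] H) (Submodule.map ((g : H →L[ℂ] H) : H →ₗ[ℂ] H) S) := by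
      intro f g S
      ext x
      simp only [Submodule.mem_map, ContinuousLinearMap.mul_apply]
      constructor
      · rintro ⟨y, hy, rfl⟩; exact ⟨g y, ⟨y, hy, rfl⟩, rfl⟩
      · rintro ⟨_, ⟨y, hy, rfl⟩, rfl⟩; exact ⟨y, hy, rfl⟩
    have hpowK : ∀ (V : H →L[ℂ] H), Submodule.map ((V : H →L[ℂ] H) : H →ₗ[ℂ] H) K = K →
        ∀ m : ℕ, Submodule.map (((V ^ m) : H →L[ℂ] H) : H →ₗ[ℂ] H) K = K := by
      intro V hV m
      induction m with
      | zero =>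
        ext x
        simp [Submodule.mem_map]
      | succ k ih =>
        rw [pow_succ', hmapmul, ih, hV]
    intro x hx
    refine (hmemM x).mpr ?_
    rintro ⟨m, n⟩
    have : x ∈ Submodule.map (((V₁ ^ m * V₂ ^ n) : H →L[ℂ] H) : H →ₗ[ℂ] H) K := by
      rw [hmapmul, hpowK V₂ hK2 n, hpowK V₁ hK1 m]
      exact hx
    obtain ⟨y, _, hy⟩ := this
    exact ⟨y, hy⟩
  -- assemble
  refine ⟨P, hPsa, hPidem, by rw [hPrange], hconj V₁ hadj1 hmap1, hconj V₂ hadj2 hmap2,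
    by rw [hPrange]; exact hmap1, by rw [hPrange]; exact hmap2,
    by rw [hPrange]; exact hperp V₁ hinner1 hmap1,
    by rw [hPrange]; exact hperp V₂ hinner2 hmap2,
    fun K _ _ hK1 hK2 => by rw [hPrange]; exact hmax K hK1 hK2⟩
end

section
/- Let V be an isometry on a Hilbert space H, and let P be an orthogonal projection on H satisfying VPV* = P·(VV*) = (VV*)·P (i.e., PH reduces V) and P(VPV*)P = P. Then VPV* = P, and consequently P ≤ V^n(V^n)* for all n ≥ 0, i.e., PH ⊆ ⋂_n V^n(H). -/
open ContinuousLinearMap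

private lemma aux_idem_pos {H : Type*} [NormedAddCommGroup H] [InnerProductSpace ℂ H]
    [CompleteSpace H] (R : H →L[ℂ] H) (hsa : IsSelfAdjoint R) (hid : R * R = R) :
    R.IsPositive := by
  refine ⟨ContinuousLinearMap.isSelfAdjoint_iff_isSymmetric.mp hsa, fun x => ?_⟩
  have hsym := ContinuousLinearMap.isSelfAdjoint_iff_isSymmetric.mp hsa
  have h : (inner ℂ (R x) x : ℂ) = inner ℂ (R x) (R x) := by
    conv_lhs => rw [← hid]
    exact hsym (R x) x
  rw [ContinuousLinearMap.reApplyInnerSelf_apply, h]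
  exact inner_self_nonneg

/-- If `P` is a projection onto a reducing subspace of an isometry `V` on which the
restriction is fully coisometric, then `V P V* = P` and `P ≤ V^n (V^n)*` for all `n`. -/
theorem reducing_coisometric_part_is_unitary
    {H : Type*} [NormedAddCommGroup H] [InnerProductSpace ℂ H] [CompleteSpace H]
    (V P : H →L[ℂ] H)
    (hV : adjoint V ∘L V = 1)
    (hP : IsSelfAdjoint P) (hP2 : P ∘L P = P)
    (hred₁ : V ∘L P ∘L adjoint V = P ∘L (V ∘L adjoint V))
    (hred₂ : V ∘L P ∘L adjoint V = (V ∘L adjoint V) ∘L P)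
    (hco : P ∘L (V ∘L P ∘L adjoint V) ∘L P = P) :
    V ∘L P ∘L adjoint V = P ∧
    ∀ n : ℕ, (((V ^ n) ∘L adjoint (V ^ n)) - P).IsPositive := by
  set W : H →L[ℂ] H := V * adjoint V with hW
  have hVmul : adjoint V * V = 1 := hV
  have hWidem : W * W = W := by
    rw [hW, mul_assoc, ← mul_assoc (adjoint V), hVmul, one_mul]
  set Q : H →L[ℂ] H := V ∘L P ∘L adjoint V with hQdef
  have hQ1 : Q = P * W := hred₁
  have hQ2 : Q = W * P := hred₂
  have hPmul : P * P = P := hP2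
  have hcoP : P * Q * P = P := hco
  have hPWP : P * W * P = P := by
    have h := hcoP
    rw [hQ2, ← mul_assoc, mul_assoc (P * W), hPmul] at h
    exact h
  have hPQ : P * Q = P := by rw [hQ2, ← mul_assoc]; exact hPWP
  have hQP : Q * P = P := by rw [hQ1]; exact hPWP
  have hQQ : Q * Q = P := by
    nth_rewrite 1 [hQ1]; nth_rewrite 1 [hQ2]
    rw [mul_assoc, ← mul_assoc W W, hWidem, ← mul_assoc]; exact hPWP
  have hQsa : IsSelfAdjoint Q := by
    rw [hQdef, IsSelfAdjoint, star_eq_adjoint, adjoint_comp, adjoint_comp,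
      adjoint_adjoint, hP.adjoint_eq]
    rfl
  have hDsq : (P - Q) * (P - Q) = 0 := by
    rw [sub_mul, mul_sub, mul_sub, hPmul, hPQ, hQP, hQQ]
    abel
  have hDsa : IsSelfAdjoint (P - Q) := hP.sub hQsa
  have hDsym := ContinuousLinearMap.isSelfAdjoint_iff_isSymmetric.mp hDsa
  have hQeqP : Q = P := by
    ext x
    have h0 : (P - Q) ((P - Q) x) = 0 := by
      have := congrFun (congrArg DFunLike.coe hDsq) x
      simpa using this
    have h1 : (inner ℂ ((P - Q) x) ((P - Q) x) : ℂ) = 0 := by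
      have h2 := hDsym ((P - Q) x) x
      simp only [ContinuousLinearMap.coe_coe] at h2
      rw [h0, inner_zero_left] at h2
      exact h2.symm
    have h3 : P x - Q x = 0 := by
      have := inner_self_eq_zero.mp h1
      simpa using this
    exact (sub_eq_zero.mp h3).symm
  refine ⟨hQeqP, ?_⟩
  intro n
  induction n with
  | zero =>
    have hadj1 : adjoint (1 : H →L[ℂ] H) = 1 := by
      rw [← star_eq_adjoint]; exact star_one _
    have h1P : ((V ^ 0) ∘L adjoint (V ^ 0) : H →L[ℂ] H) - P = 1 - P := by
      rw [pow_zero, hadj1]; ext x; simp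
    rw [h1P]
    refine aux_idem_pos _ ((IsSelfAdjoint.one (H →L[ℂ] H)).sub hP) ?_
    rw [sub_mul, mul_sub, mul_sub, one_mul, mul_one, hPmul]
    abel
  | succ n ih =>
    have hpow : (V ^ (n + 1) : H →L[ℂ] H) = V ∘L V ^ n := by
      rw [pow_succ']; rfl
    have hadj : adjoint (V ^ (n + 1) : H →L[ℂ] H) = adjoint (V ^ n) ∘L adjoint V := by
      rw [hpow, adjoint_comp]
    have expand : V ∘L (((V ^ n) ∘L adjoint (V ^ n)) - P) ∘L adjoint V
        = (V ∘L ((V ^ n) ∘L adjoint (V ^ n)) ∘L adjoint V) - Q := by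
      rw [hQdef]; ext x; simp
    have key : (V ^ (n + 1)) ∘L adjoint (V ^ (n + 1)) - P
        = V ∘L (((V ^ n) ∘L adjoint (V ^ n)) - P) ∘L adjoint V := by
      rw [expand, hQeqP, hpow, adjoint_comp]
      ext x
      simp [comp_apply, sub_apply]
    rw [key]
    exact ih.conj_adjoint V
end

section
/- Let T be a contraction on a Hilbert space H and let V on K ⊇ H be its minimal isometric dilation. Then V is unitarily equivalent to a unilateral shift (i.e., ⋂_n V^n(K) = {0}) if and only if (T*)^n h → 0 for every h ∈ H. -/
open ContinuousLinearMap Filter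
open scoped InnerProductSpace

/-- The minimal isometric dilation `V` of a contraction `T` is a unilateral shift
(i.e. `⋂ n, V^n(K) = {0}`) iff `(T*)^n h → 0` for every `h`. -/
theorem minimal_isometric_dilation_shift_iff
    {K : Type*} [NormedAddCommGroup K] [InnerProductSpace ℂ K] [CompleteSpace K]
    {H : Type*} [NormedAddCommGroup H] [InnerProductSpace ℂ H] [CompleteSpace H]
    (ι : H →L[ℂ] K) (hι : ∀ h, ‖ι h‖ = ‖h‖)
    (T : H →L[ℂ] H) (hT : ‖T‖ ≤ 1)
    (V : K →L[ℂ] K) (hV : ∀ x, ‖V x‖ = ‖x‖)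
    (hdil : ∀ (n : ℕ) (h : H), adjoint ι ((V ^ n) (ι h)) = (T ^ n) h)
    (hmin : (⨆ n : ℕ, LinearMap.range (((V ^ n) ∘L ι : H →L[ℂ] K) : H →ₗ[ℂ] K)).topologicalClosure = ⊤) :
    (⨅ n : ℕ, LinearMap.range ((V ^ n : K →L[ℂ] K) : K →ₗ[ℂ] K)) = ⊥ ↔
    ∀ h : H, Tendsto (fun n : ℕ => ((adjoint T) ^ n) h) atTop (nhds 0) := by
  set A := adjoint V with hA
  have hVinner : ∀ a b : K, ⟪V a, V b⟫_ℂ = ⟪a, b⟫_ℂ :=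
    fun a b => LinearIsometry.inner_map_map ⟨(V : K →ₗ[ℂ] K), hV⟩ a b
  have hAV : ∀ x : K, A (V x) = x := by
    intro x
    refine ext_inner_right ℂ fun v => ?_
    rw [hA, adjoint_inner_left, hVinner]
  have hA1 : ∀ x : K, ‖A x‖ ≤ ‖x‖ := by
    intro x
    have h1 : ‖V‖ ≤ 1 := V.opNorm_le_bound zero_le_one (fun x => by rw [hV x, one_mul])
    calc ‖A x‖ ≤ ‖A‖ * ‖x‖ := A.le_opNorm x
      _ ≤ 1 * ‖x‖ := by
          have : ‖A‖ ≤ 1 := by rw [hA, LinearIsometryEquiv.norm_map adjoint V]; exact h1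
          exact mul_le_mul_of_nonneg_right this (norm_nonneg x)
      _ = ‖x‖ := one_mul _
  have hadj_pow : ∀ n : ℕ, adjoint (V ^ n) = A ^ n := by
    intro n
    rw [hA, ← star_eq_adjoint, ← star_eq_adjoint, ← star_pow]
  have hVpow_succ : ∀ (n : ℕ) (x : K), (V ^ (n + 1)) x = V ((V ^ n) x) := by
    intro n x; rw [pow_succ', mul_apply_eq_comp]
  have hVpow_add : ∀ (n k : ℕ) (x : K), (V ^ (n + k)) x = (V ^ n) ((V ^ k) x) := by
    intro n k x; rw [pow_add, mul_apply_eq_comp]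
  have hVn : ∀ (n : ℕ) (x : K), ‖(V ^ n) x‖ = ‖x‖ := by
    intro n
    induction n with
    | zero => intro x; simp
    | succ n ih => intro x; rw [hVpow_succ, hV, ih]
  have hVninner : ∀ (n : ℕ) (a b : K), ⟪(V ^ n) a, (V ^ n) b⟫_ℂ = ⟪a, b⟫_ℂ := by
    intro n
    induction n with
    | zero => intro a b; simp
    | succ n ih => intro a b; rw [hVpow_succ, hVpow_succ, hVinner, ih]
  have hAVn : ∀ (n : ℕ) (x : K), (A ^ n) ((V ^ n) x) = x := by
    intro n
    induction n with
    | zero => intro x; simp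
    | succ n ih =>
        intro x
        rw [pow_succ, mul_apply_eq_comp, hVpow_succ, hAV, ih]
  have hAn1 : ∀ (n : ℕ) (x : K), ‖(A ^ n) x‖ ≤ ‖x‖ := by
    intro n
    induction n with
    | zero => intro x; simp
    | succ n ih =>
        intro x
        rw [pow_succ', mul_apply_eq_comp]
        exact (hA1 _).trans (ih x)
  have horth : (⨆ n : ℕ, LinearMap.range (((V ^ n) ∘L ι : H →L[ℂ] K) : H →ₗ[ℂ] K))ᗮ = ⊥ :=
    Submodule.topologicalClosure_eq_top_iff.mp hmin
  have hzero : ∀ z : K, (∀ (n : ℕ) (g : H), ⟪(V ^ n) (ι g), z⟫_ℂ = 0) → z = 0 := by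
    intro z hz
    have hmem : z ∈ (⨆ n : ℕ, LinearMap.range (((V ^ n) ∘L ι : H →L[ℂ] K) : H →ₗ[ℂ] K))ᗮ := by
      rw [Submodule.mem_orthogonal]
      intro u hu
      refine Submodule.iSup_induction (motive := fun u => ⟪u, z⟫_ℂ = 0) _ hu ?_ ?_ ?_
      · rintro n u ⟨g, rfl⟩
        exact hz n g
      · simp
      · intro a b ha hb; rw [inner_add_left, ha, hb, add_zero]
    rw [horth] at hmem
    simpa using hmem
  have hcomm : ∀ h : H, A (ι h) = ι (adjoint T h) := by
    intro h
    have key : A (ι h) - ι (adjoint T h) = 0 := by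
      apply hzero
      intro n g
      rw [inner_sub_right]
      have e1 : ⟪(V ^ n) (ι g), A (ι h)⟫_ℂ = ⟪(T ^ (n + 1)) g, h⟫_ℂ := by
        calc ⟪(V ^ n) (ι g), A (ι h)⟫_ℂ
            = ⟪V ((V ^ n) (ι g)), ι h⟫_ℂ := by rw [hA, adjoint_inner_right]
          _ = ⟪(V ^ (n + 1)) (ι g), ι h⟫_ℂ := by rw [hVpow_succ]
          _ = ⟪adjoint ι ((V ^ (n + 1)) (ι g)), h⟫_ℂ := (adjoint_inner_left ι h _).symm
          _ = ⟪(T ^ (n + 1)) g, h⟫_ℂ := by rw [hdil]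
      have e2 : ⟪(V ^ n) (ι g), ι (adjoint T h)⟫_ℂ = ⟪(T ^ (n + 1)) g, h⟫_ℂ := by
        calc ⟪(V ^ n) (ι g), ι (adjoint T h)⟫_ℂ
            = ⟪adjoint ι ((V ^ n) (ι g)), adjoint T h⟫_ℂ := (adjoint_inner_left ι _ _).symm
          _ = ⟪(T ^ n) g, adjoint T h⟫_ℂ := by rw [hdil]
          _ = ⟪T ((T ^ n) g), h⟫_ℂ := adjoint_inner_right T _ _
          _ = ⟪(T ^ (n + 1)) g, h⟫_ℂ := by rw [← mul_apply_eq_comp, ← pow_succ']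
      rw [e1, e2, sub_self]
    exact sub_eq_zero.mp key
  have hcommn : ∀ (n : ℕ) (h : H), (A ^ n) (ι h) = ι (((adjoint T) ^ n) h) := by
    intro n
    induction n with
    | zero => intro h; simp
    | succ n ih =>
        intro h
        rw [pow_succ, mul_apply_eq_comp, hcomm, ih, pow_succ, mul_apply_eq_comp]
  constructor
  · -- shift implies (T*)^n → 0
    intro hbot h
    set x := ι h with hx
    set u : ℕ → K := fun n => (V ^ n) ((A ^ n) x) with hu
    set b : ℕ → ℝ := fun n => ‖(A ^ n) x‖ with hb
    have hnu : ∀ n, ‖u n‖ = b n := fun n => hVn n _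
    have hmono : ∀ n, b (n + 1) ≤ b n := by
      intro n
      show ‖(A ^ (n + 1)) x‖ ≤ ‖(A ^ n) x‖
      rw [pow_succ', mul_apply_eq_comp]
      exact hA1 _
    have hanti2 : Antitone fun n => b n ^ 2 := by
      apply antitone_nat_of_succ_le
      intro n
      exact pow_le_pow_left₀ (norm_nonneg _) (hmono n) 2
    have hbdd : BddBelow (Set.range fun n => b n ^ 2) := by
      refine ⟨0, ?_⟩
      rintro y ⟨n, rfl⟩
      positivity
    set L := ⨅ n, b n ^ 2 with hL
    have htendL : Tendsto (fun n => b n ^ 2) atTop (nhds L) :=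
      tendsto_atTop_ciInf hanti2 hbdd
    have hLle : ∀ n, L ≤ b n ^ 2 := fun n => ciInf_le hbdd n
    have hdiff : ∀ n m : ℕ, n ≤ m → ‖u n - u m‖ ^ 2 = b n ^ 2 - b m ^ 2 := by
      intro n m hnm
      obtain ⟨k, rfl⟩ := Nat.exists_eq_add_of_le hnm
      have hinner : ⟪u n, u (n + k)⟫_ℂ = ((b (n + k) : ℂ)) ^ 2 := by
        calc ⟪u n, u (n + k)⟫_ℂ
            = ⟪(V ^ n) ((A ^ n) x), (V ^ n) ((V ^ k) ((A ^ (n + k)) x))⟫_ℂ := by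
              simp only [hu]; rw [hVpow_add]
          _ = ⟪(A ^ n) x, (V ^ k) ((A ^ (n + k)) x)⟫_ℂ := hVninner n _ _
          _ = ⟪adjoint (V ^ k) ((A ^ n) x), (A ^ (n + k)) x⟫_ℂ :=
              (adjoint_inner_left (V ^ k) _ _).symm
          _ = ⟪(A ^ k) ((A ^ n) x), (A ^ (n + k)) x⟫_ℂ := by rw [hadj_pow]
          _ = ⟪(A ^ (n + k)) x, (A ^ (n + k)) x⟫_ℂ := by
              rw [← mul_apply_eq_comp, ← pow_add, Nat.add_comm k n]
          _ = ((b (n + k) : ℂ)) ^ 2 := by rw [inner_self_eq_norm_sq_to_K]; rfl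
      have hns := norm_sub_sq (𝕜 := ℂ) (u n) (u (n + k))
      rw [hinner, hnu, hnu] at hns
      have hre : RCLike.re (((b (n + k) : ℂ)) ^ 2) = b (n + k) ^ 2 := by
        norm_num [← Complex.ofReal_pow]
      rw [hns, hre]
      ring
    have hcauchy : CauchySeq u := by
      rw [Metric.cauchySeq_iff]
      intro ε hε
      have hlt : ∀ᶠ n in atTop, b n ^ 2 < L + ε ^ 2 := by
        apply htendL.eventually_lt_const
        have : (0 : ℝ) < ε ^ 2 := by positivity
        linarith
      obtain ⟨N, hN⟩ := eventually_atTop.mp hlt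
      refine ⟨N, fun m hm n hn => ?_⟩
      have key2 : ∀ p q : ℕ, N ≤ p → p ≤ q → dist (u p) (u q) < ε := by
        intro p q hp hpq
        rw [dist_eq_norm]
        have h3 : ‖u p - u q‖ ^ 2 = b p ^ 2 - b q ^ 2 := hdiff p q hpq
        have h4 : ‖u p - u q‖ ^ 2 < ε ^ 2 := by
          rw [h3]
          have := hN p hp
          have := hLle q
          linarith
        exact lt_of_pow_lt_pow_left₀ 2 hε.le h4
      rcases le_total m n with hmn | hnm
      · exact key2 m n hm hmn
      · rw [dist_comm]; exact key2 n m hn hnm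
    obtain ⟨y, hy⟩ := cauchySeq_tendsto_of_complete hcauchy
    have hymem : ∀ n : ℕ, y ∈ LinearMap.range ((V ^ n : K →L[ℂ] K) : K →ₗ[ℂ] K) := by
      intro n
      have hiso : Isometry (V ^ n : K →L[ℂ] K) :=
        AddMonoidHomClass.isometry_of_norm _ (hVn n)
      have hclosed : IsClosed (Set.range ((V ^ n : K →L[ℂ] K) : K → K)) :=
        hiso.isClosedEmbedding.isClosed_range
      have hmem : ∀ᶠ m in atTop, u m ∈ Set.range ((V ^ n : K →L[ℂ] K) : K → K) := by
        rw [eventually_atTop]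
        refine ⟨n, fun m hm => ?_⟩
        obtain ⟨k, rfl⟩ := Nat.exists_eq_add_of_le hm
        exact ⟨(V ^ k) ((A ^ (n + k)) x), by simp only [hu]; rw [hVpow_add]⟩
      obtain ⟨z, hz⟩ := hclosed.mem_of_tendsto hy hmem
      exact ⟨z, hz⟩
    have hy0 : y = 0 := by
      have hmem : y ∈ (⨅ n : ℕ, LinearMap.range ((V ^ n : K →L[ℂ] K) : K →ₗ[ℂ] K)) := (Submodule.mem_iInf _).mpr hymem
      rw [hbot] at hmem
      simpa using hmem
    have hnorm0 : Tendsto (fun n => ‖u n‖) atTop (nhds 0) := by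
      have := hy.norm
      rw [hy0, norm_zero] at this
      exact this
    rw [tendsto_zero_iff_norm_tendsto_zero]
    have heq : (fun n : ℕ => ‖((adjoint T) ^ n) h‖) = fun n => ‖u n‖ := by
      funext n
      rw [hnu, hb]
      show ‖((adjoint T) ^ n) h‖ = ‖(A ^ n) x‖
      rw [hx, hcommn, hι]
    rw [heq]
    exact hnorm0
  · -- (T*)^n → 0 implies shift
    intro htend
    rw [Submodule.eq_bot_iff]
    intro x hx
    have hxn : ∀ n : ℕ, x ∈ LinearMap.range ((V ^ n : K →L[ℂ] K) : K →ₗ[ℂ] K) := fun n => (Submodule.mem_iInf _).mp hx n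
    have hxm : ∀ m n : ℕ, (A ^ m) x ∈ LinearMap.range ((V ^ n : K →L[ℂ] K) : K →ₗ[ℂ] K) := by
      intro m n
      obtain ⟨y, hy⟩ := hxn (m + n)
      refine ⟨y, ?_⟩
      have hx' : x = (V ^ m) ((V ^ n) y) := by rw [← hVpow_add, show (V ^ (m + n)) y = x from hy]
      rw [hx', hAVn]; rfl
    have key : ∀ x' : K, (∀ n, (V ^ n) ((A ^ n) x') = x') → ∀ g : H, ⟪x', ι g⟫_ℂ = 0 := by
      intro x' hx' g
      have hbnd : ∀ n : ℕ, ‖⟪x', ι g⟫_ℂ‖ ≤ ‖x'‖ * ‖((adjoint T) ^ n) g‖ := by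
        intro n
        have heq : ⟪x', ι g⟫_ℂ = ⟪(A ^ n) x', ι (((adjoint T) ^ n) g)⟫_ℂ := by
          rw [← hcommn]
          calc ⟪x', ι g⟫_ℂ
              = ⟪(V ^ n) ((A ^ n) x'), ι g⟫_ℂ := by rw [hx']
            _ = ⟪(A ^ n) x', adjoint (V ^ n) (ι g)⟫_ℂ := (adjoint_inner_right (V ^ n) _ _).symm
            _ = ⟪(A ^ n) x', (A ^ n) (ι g)⟫_ℂ := by rw [hadj_pow]
        rw [heq]
        calc ‖⟪(A ^ n) x', ι (((adjoint T) ^ n) g)⟫_ℂ‖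
            ≤ ‖(A ^ n) x'‖ * ‖ι (((adjoint T) ^ n) g)‖ := norm_inner_le_norm _ _
          _ ≤ ‖x'‖ * ‖((adjoint T) ^ n) g‖ := by
              rw [hι]
              exact mul_le_mul_of_nonneg_right (hAn1 n x') (norm_nonneg _)
      have h0 : Tendsto (fun n : ℕ => ‖x'‖ * ‖((adjoint T) ^ n) g‖) atTop (nhds 0) := by
        have hn := (htend g).norm
        rw [norm_zero] at hn
        have := hn.const_mul ‖x'‖
        simpa using this
      have hle : ‖⟪x', ι g⟫_ℂ‖ ≤ 0 := ge_of_tendsto h0 (Eventually.of_forall hbnd)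
      have : ‖⟪x', ι g⟫_ℂ‖ = 0 := le_antisymm hle (norm_nonneg _)
      exact norm_eq_zero.mp this
    apply hzero
    intro n g
    have hrw : ⟪(V ^ n) (ι g), x⟫_ℂ = ⟪ι g, (A ^ n) x⟫_ℂ := by
      calc ⟪(V ^ n) (ι g), x⟫_ℂ
          = ⟪ι g, adjoint (V ^ n) x⟫_ℂ := (adjoint_inner_right (V ^ n) _ _).symm
        _ = ⟪ι g, (A ^ n) x⟫_ℂ := by rw [hadj_pow]
    have hproj : ∀ m : ℕ, (V ^ m) ((A ^ m) ((A ^ n) x)) = (A ^ n) x := by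
      intro m
      obtain ⟨y, hy⟩ := hxm n m
      rw [← show (V ^ m) y = (A ^ n) x from hy, hAVn]
    have h1 := key ((A ^ n) x) hproj g
    rw [hrw, ← inner_conj_symm, h1, map_zero]
end

section
/- Let T be a contraction on H with minimal isometric dilation V on K. Then V is a coisometry (VV* = I_K) if and only if T is a coisometry (TT* = I_H). -/
open ContinuousLinearMap

local notation "⟪" x ", " y "⟫" => @inner ℂ _ _ x y

lemma dense_ext_vec {K : Type*} [NormedAddCommGroup K] [InnerProductSpace ℂ K] [CompleteSpace K]
    (S : Submodule ℂ K) (hS : S.topologicalClosure = ⊤) {a b : K}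
    (h : ∀ x ∈ S, ⟪a, x⟫ = ⟪b, x⟫) : a = b := by
  have hbot : Sᗮ = ⊥ := Submodule.topologicalClosure_eq_top_iff.mp hS
  have : a - b ∈ Sᗮ := by
    rw [Submodule.mem_orthogonal]
    intro u hu
    rw [inner_sub_right, ← inner_conj_symm u a, ← inner_conj_symm u b, h u hu, sub_self]
  rw [hbot, Submodule.mem_bot, sub_eq_zero] at this
  exact this

/-- The minimal isometric dilation of a contraction `T` is a coisometry iff `T` is. -/
theorem minimal_isometric_dilation_coisometry_iff
    {K : Type*} [NormedAddCommGroup K] [InnerProductSpace ℂ K] [CompleteSpace K]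
    {H : Type*} [NormedAddCommGroup H] [InnerProductSpace ℂ H] [CompleteSpace H]
    (ι : H →L[ℂ] K) (hι : ∀ h, ‖ι h‖ = ‖h‖)
    (T : H →L[ℂ] H) (hT : ‖T‖ ≤ 1)
    (V : K →L[ℂ] K) (hV : ∀ x, ‖V x‖ = ‖x‖)
    (hdil : ∀ (n : ℕ) (h : H), adjoint ι ((V ^ n) (ι h)) = (T ^ n) h)
    (hmin : (⨆ n : ℕ, LinearMap.range (((V ^ n) ∘L ι : H →L[ℂ] K) : H →ₗ[ℂ] K)).topologicalClosure = ⊤) :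
    V ∘L adjoint V = 1 ↔ T ∘L adjoint T = 1 := by
  set S : Submodule ℂ K := ⨆ n : ℕ, LinearMap.range (((V ^ n) ∘L ι : H →L[ℂ] K) : H →ₗ[ℂ] K) with hSdef
  -- isometries preserve inner products
  have ιli : H →ₗᵢ[ℂ] K := ⟨(ι : H →ₗ[ℂ] K), hι⟩
  have hιinner : ∀ x y : H, ⟪ι x, ι y⟫ = ⟪x, y⟫ := fun x y =>
    (LinearIsometry.inner_map_map ⟨(ι : H →ₗ[ℂ] K), hι⟩ x y)
  have hVinner : ∀ x y : K, ⟪V x, V y⟫ = ⟪x, y⟫ := fun x y =>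
    (LinearIsometry.inner_map_map ⟨(V : K →ₗ[ℂ] K), hV⟩ x y)
  have hιadj : ∀ x : H, adjoint ι (ι x) = x := by
    intro x
    apply ext_inner_right ℂ
    intro y
    rw [adjoint_inner_left, hιinner]
  have hVadj : ∀ x : K, adjoint V (V x) = x := by
    intro x
    apply ext_inner_right ℂ
    intro y
    rw [adjoint_inner_left]
    exact hVinner x y
  -- hdil at n = 1
  have hdil1 : ∀ h : H, adjoint ι (V (ι h)) = T h := by
    intro h
    have := hdil 1 h
    simpa using this
  -- key : V* ι = ι T*
  have key : ∀ h : H, adjoint V (ι h) = ι (adjoint T h) := by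
    intro h
    apply dense_ext_vec S hmin
    intro x hx
    induction hx using Submodule.iSup_induction' with
    | mem n x hx =>
      obtain ⟨g, rfl⟩ := hx
      rw [coe_coe, comp_apply]
      rw [adjoint_inner_left]
      have h1 : V ((V ^ n) (ι g)) = (V ^ (n+1)) (ι g) := by
        rw [pow_succ']; rfl
      rw [h1, ← adjoint_inner_right, hdil (n+1) g]
      rw [← adjoint_inner_right, hdil n g, adjoint_inner_left]
      rw [pow_succ']
      rfl
    | zero => simp
    | add x hx y hy ihx ihy => rw [inner_add_right, inner_add_right, ihx, ihy]
  constructor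
  · -- V V* = 1 → T T* = 1
    intro hVV
    ext h
    have : T (adjoint T h) = h := by
      rw [← hdil1 (adjoint T h), ← key h]
      have : V (adjoint V (ι h)) = ι h := by
        have := congrArg (fun A => A (ι h)) hVV
        simpa using this
      rw [this, hιadj]
    simpa using this
  · -- T T* = 1 → V V* = 1
    intro hTT
    have hTTapp : ∀ h : H, T (adjoint T h) = h := by
      intro h
      have := congrArg (fun A => A h) hTT
      simpa using this
    -- first: ι h = V (ι (T* h))
    have hrange : ∀ h : H, V (ι (adjoint T h)) = ι h := by
      intro h
      have hd : ⟪ι h - V (ι (adjoint T h)), ι h - V (ι (adjoint T h))⟫ = 0 := by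
        rw [inner_sub_left, inner_sub_right, inner_sub_right]
        have e1 : ⟪ι h, V (ι (adjoint T h))⟫ = ⟪h, h⟫ := by
          rw [← adjoint_inner_left V, key, hιinner, adjoint_inner_left, hTTapp]
        have e2 : ⟪V (ι (adjoint T h)), ι h⟫ = ⟪h, h⟫ := by
          rw [← inner_conj_symm, e1, inner_conj_symm]
        have e3 : ⟪V (ι (adjoint T h)), V (ι (adjoint T h))⟫ = ⟪h, h⟫ := by
          rw [hVinner, hιinner, adjoint_inner_left, hTTapp]
        rw [hιinner, e1, e2, e3]
        ring
      have := inner_self_eq_zero.mp hd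
      rw [sub_eq_zero] at this
      exact this.symm
    -- now V V* = 1 on the dense set
    have hdense : Dense (S : Set K) := Submodule.dense_iff_topologicalClosure_eq_top.mpr hmin
    have heq : Set.EqOn ⇑(V ∘L adjoint V) ⇑(1 : K →L[ℂ] K) (S : Set K) := ?_
    · exact DFunLike.coe_injective
        (Continuous.ext_on hdense (V ∘L adjoint V).continuous (1 : K →L[ℂ] K).continuous heq)
    intro x hx
    induction hx using Submodule.iSup_induction' with
    | mem n x hx =>
      obtain ⟨g, rfl⟩ := hx
      simp only [coe_coe, comp_apply, ContinuousLinearMap.one_apply]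
      cases n with
      | zero =>
        simp only [pow_zero, ContinuousLinearMap.one_apply]
        rw [key, hrange]
      | succ m =>
        have h1 : (V ^ (m+1)) (ι g) = V ((V ^ m) (ι g)) := by
          rw [pow_succ']; rfl
        rw [h1, hVadj]
    | zero => simp
    | add x hx y hy ihx ihy =>
      simp only [comp_apply, one_apply] at *
      rw [map_add, map_add, ihx, ihy, map_add]
end

section
/- Let V₁, V₂ be doubly commuting isometries on H and let P_∞^i be the projection onto ⋂_n V_i^n(H). Then P_∞^1 and P_∞^2 commute, and inf_{(m,n)∈ℕ²} V₁^mV₂^n(V₁^mV₂^n)* = P_∞^1 P_∞^2; i.e., ⋂_{m,n} V₁^mV₂^n(H) = (⋂_m V₁^m(H)) ∩ (⋂_n V₂^n(H)). -/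
open ContinuousLinearMap

section Aux

variable {H : Type*} [NormedAddCommGroup H] [InnerProductSpace ℂ H] [CompleteSpace H]

/-- Powers of an isometry are isometries (in the `star W * W = 1` form). -/
lemma aux_pow_isometry (V : H →L[ℂ] H) (hV : star V * V = 1) (n : ℕ) :
    star (V ^ n) * V ^ n = 1 := by
  rw [star_pow]
  induction n with
  | zero => simp
  | succ n ih =>
    rw [pow_succ (star V), pow_succ' V, mul_assoc, ← mul_assoc (star V), hV, one_mul, ih]

/-- Membership in the range of `W` in terms of the projection `W * star W`. -/
lemma aux_mem_range_iff (W : H →L[ℂ] H) (hW : star W * W = 1) (x : H) :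
    x ∈ LinearMap.range (W : H →ₗ[ℂ] H) ↔ (W * star W) x = x := by
  constructor
  · rintro ⟨y, rfl⟩
    have : W * star W * W = W := by rw [mul_assoc, hW, mul_one]
    calc (W * star W) (W y) = (W * star W * W) y := rfl
    _ = W y := by rw [this]
  · intro h
    exact ⟨star W x, h⟩

lemma aux_isClosed_range (W : H →L[ℂ] H) (hW : star W * W = 1) :
    IsClosed (LinearMap.range (W : H →ₗ[ℂ] H) : Set H) := by
  have : (LinearMap.range (W : H →ₗ[ℂ] H) : Submodule ℂ H) = LinearMap.ker ((1 - W * star W : H →L[ℂ] H) : H →ₗ[ℂ] H) := by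
    ext x
    simp only [aux_mem_range_iff W hW, LinearMap.mem_ker, ContinuousLinearMap.sub_apply,
      ContinuousLinearMap.one_apply, sub_eq_zero]
    rw [ContinuousLinearMap.coe_coe, ContinuousLinearMap.sub_apply,
      ContinuousLinearMap.one_apply, sub_eq_zero]
    exact eq_comm
  rw [this]
  exact isClosed_ker _

/-- A self-adjoint operator leaving a complete subspace invariant commutes with the
orthogonal projection onto it. -/
lemma aux_proj_comm (K : Submodule ℂ H) [CompleteSpace K] (T : H →L[ℂ] H)
    (hT : IsSelfAdjoint T) (hinv : ∀ x ∈ K, T x ∈ K) :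
    T ∘L (K.subtypeL ∘L (K.orthogonalProjectionOnto : H →L[ℂ] K)) =
      (K.subtypeL ∘L (K.orthogonalProjectionOnto : H →L[ℂ] K)) ∘L T := by
  set P := K.subtypeL ∘L (K.orthogonalProjectionOnto : H →L[ℂ] K) with hP
  have hPapp : ∀ x, P x = (K.orthogonalProjectionOnto x : H) := fun x => rfl
  have hPK : ∀ x ∈ K, P x = x := by
    intro x hx; rw [hPapp]; exact Submodule.starProjection_eq_self_iff.mpr hx
  have hPO : ∀ x ∈ Kᗮ, P x = 0 := by
    intro x hx; rw [hPapp, Submodule.orthogonalProjectionOnto_apply_of_mem_orthogonal hx]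
    simp
  have hTO : ∀ x ∈ Kᗮ, T x ∈ Kᗮ := by
    intro x hx
    rw [Submodule.mem_orthogonal] at hx ⊢
    intro u hu
    have : inner ℂ u (T x) = (inner ℂ (T u) x : ℂ) := by
      rw [← ContinuousLinearMap.adjoint_inner_left, hT.adjoint_eq]
    rw [this]
    exact hx _ (hinv u hu)
  ext x
  have hmemP : P x ∈ K := by rw [hPapp]; exact SetLike.coe_mem _
  have hmemO : x - P x ∈ Kᗮ := by rw [hPapp]; exact Submodule.sub_starProjection_mem_orthogonal x
  have hTx : T x = T (P x) + T (x - P x) := by rw [← map_add, add_sub_cancel]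
  simp only [ContinuousLinearMap.comp_apply]
  rw [hTx, map_add, hPK _ (hinv _ hmemP), hPO _ (hTO _ hmemO), add_zero]

end Aux

/-- For doubly commuting isometries, the projections onto `⋂ₙ Vᵢⁿ(H)` commute, and
`⋂_{m,n} V₁^m V₂^n(H) = (⋂_m V₁^m(H)) ∩ (⋂_n V₂^n(H))`. -/
theorem limit_projections_commute_and_intersection
    {H : Type*} [NormedAddCommGroup H] [InnerProductSpace ℂ H] [CompleteSpace H]
    (V₁ V₂ : H →L[ℂ] H)
    (h₁ : ∀ x, ‖V₁ x‖ = ‖x‖) (h₂ : ∀ x, ‖V₂ x‖ = ‖x‖)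
    (hcomm : V₁ ∘L V₂ = V₂ ∘L V₁)
    (hdc : adjoint V₂ ∘L V₁ = V₁ ∘L adjoint V₂) :
    (∃ P₁ P₂ : H →L[ℂ] H,
      IsSelfAdjoint P₁ ∧ P₁ ∘L P₁ = P₁ ∧
      LinearMap.range (P₁ : H →ₗ[ℂ] H) = (⨅ n : ℕ, LinearMap.range ((V₁ ^ n : H →L[ℂ] H) : H →ₗ[ℂ] H)) ∧
      IsSelfAdjoint P₂ ∧ P₂ ∘L P₂ = P₂ ∧
      LinearMap.range (P₂ : H →ₗ[ℂ] H) = (⨅ n : ℕ, LinearMap.range ((V₂ ^ n : H →L[ℂ] H) : H →ₗ[ℂ] H)) ∧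
      P₁ ∘L P₂ = P₂ ∘L P₁) ∧
    (⨅ p : ℕ × ℕ, LinearMap.range ((V₁ ^ p.1 * V₂ ^ p.2 : H →L[ℂ] H) : H →ₗ[ℂ] H)) =
      (⨅ m : ℕ, LinearMap.range ((V₁ ^ m : H →L[ℂ] H) : H →ₗ[ℂ] H)) ⊓ (⨅ n : ℕ, LinearMap.range ((V₂ ^ n : H →L[ℂ] H) : H →ₗ[ℂ] H)) := by
  have hs₁ : star V₁ * V₁ = 1 := by
    rw [star_eq_adjoint, mul_def]; exact (norm_map_iff_adjoint_comp_self V₁).mp h₁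
  have hs₂ : star V₂ * V₂ = 1 := by
    rw [star_eq_adjoint, mul_def]; exact (norm_map_iff_adjoint_comp_self V₂).mp h₂
  have c₁ : Commute V₁ V₂ := by rw [commute_iff_eq, mul_def, mul_def]; exact hcomm
  have c₂ : Commute (star V₂) V₁ := by
    rw [commute_iff_eq, star_eq_adjoint, mul_def, mul_def]; exact hdc
  have c₃ : Commute (star V₁) V₂ := by
    rw [commute_iff_eq]
    have := congrArg star c₂.eq
    simpa [star_mul] using this
  have c₄ : Commute (star V₁) (star V₂) := by
    rw [commute_iff_eq]
    have := congrArg star c₁.eq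
    simpa [star_mul] using this.symm
  set K₁ : Submodule ℂ H := ⨅ n : ℕ, LinearMap.range ((V₁ ^ n : H →L[ℂ] H) : H →ₗ[ℂ] H) with hK₁
  set K₂ : Submodule ℂ H := ⨅ n : ℕ, LinearMap.range ((V₂ ^ n : H →L[ℂ] H) : H →ₗ[ℂ] H) with hK₂
  have hK₁c : IsClosed (K₁ : Set H) := by
    rw [hK₁, Submodule.coe_iInf]
    exact isClosed_iInter fun n => aux_isClosed_range _ (aux_pow_isometry V₁ hs₁ n)
  have hK₂c : IsClosed (K₂ : Set H) := by
    rw [hK₂, Submodule.coe_iInf]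
    exact isClosed_iInter fun n => aux_isClosed_range _ (aux_pow_isometry V₂ hs₂ n)
  haveI : CompleteSpace K₁ := hK₁c.completeSpace_coe
  haveI : CompleteSpace K₂ := hK₂c.completeSpace_coe
  set P₁ : H →L[ℂ] H := K₁.subtypeL ∘L (K₁.orthogonalProjectionOnto : H →L[ℂ] K₁) with hP₁
  set P₂ : H →L[ℂ] H := K₂.subtypeL ∘L (K₂.orthogonalProjectionOnto : H →L[ℂ] K₂) with hP₂
  have hP₁sa : IsSelfAdjoint P₁ := isSelfAdjoint_starProjection K₁
  have hP₂sa : IsSelfAdjoint P₂ := isSelfAdjoint_starProjection K₂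
  have hP₁mem : ∀ x, P₁ x ∈ K₁ := fun x => SetLike.coe_mem _
  have hP₂mem : ∀ x, P₂ x ∈ K₂ := fun x => SetLike.coe_mem _
  have hP₁fix : ∀ x ∈ K₁, P₁ x = x := fun x hx => Submodule.starProjection_eq_self_iff.mpr hx
  have hP₂fix : ∀ x ∈ K₂, P₂ x = x := fun x hx => Submodule.starProjection_eq_self_iff.mpr hx
  have hP₁idem : P₁ ∘L P₁ = P₁ := by
    ext x; exact hP₁fix _ (hP₁mem x)
  have hP₂idem : P₂ ∘L P₂ = P₂ := by
    ext x; exact hP₂fix _ (hP₂mem x)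
  have hP₁range : LinearMap.range (P₁ : H →ₗ[ℂ] H) = K₁ := by
    apply le_antisymm
    · rintro _ ⟨y, rfl⟩; exact hP₁mem y
    · intro x hx; exact ⟨x, hP₁fix x hx⟩
  have hP₂range : LinearMap.range (P₂ : H →ₗ[ℂ] H) = K₂ := by
    apply le_antisymm
    · rintro _ ⟨y, rfl⟩; exact hP₂mem y
    · intro x hx; exact ⟨x, hP₂fix x hx⟩
  -- the projection V₂ⁿ (V₂ⁿ)* leaves K₁ invariant
  have hQsa : ∀ n : ℕ, IsSelfAdjoint (V₂ ^ n * star (V₂ ^ n)) := fun n => by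
    rw [isSelfAdjoint_iff, star_mul, star_star]
  have hQinv : ∀ n : ℕ, ∀ y ∈ K₁, (V₂ ^ n * star (V₂ ^ n)) y ∈ K₁ := by
    intro n y hy
    rw [hK₁, Submodule.mem_iInf] at hy ⊢
    intro m
    obtain ⟨z, rfl⟩ := hy m
    have d : Commute (V₁ ^ m) (V₂ ^ n * star (V₂ ^ n)) := by
      rw [star_pow]
      exact ((c₁.pow_right n).mul_right (c₂.symm.pow_right n)).pow_left m
    refine ⟨(V₂ ^ n * star (V₂ ^ n)) z, ?_⟩
    calc (V₁ ^ m) ((V₂ ^ n * star (V₂ ^ n)) z)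
        = (V₁ ^ m * (V₂ ^ n * star (V₂ ^ n))) z := rfl
      _ = ((V₂ ^ n * star (V₂ ^ n)) * V₁ ^ m) z := by rw [d.eq]
      _ = (V₂ ^ n * star (V₂ ^ n)) ((V₁ ^ m) z) := rfl
  -- P₁ leaves K₂ invariant
  have hinv12 : ∀ x ∈ K₂, P₁ x ∈ K₂ := by
    intro x hx
    rw [hK₂, Submodule.mem_iInf] at hx ⊢
    intro n
    have hQc := aux_proj_comm K₁ (V₂ ^ n * star (V₂ ^ n)) (hQsa n) (hQinv n)
    rw [← hP₁] at hQc
    have hx' := (aux_mem_range_iff _ (aux_pow_isometry V₂ hs₂ n) x).mp (hx n)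
    rw [aux_mem_range_iff _ (aux_pow_isometry V₂ hs₂ n)]
    calc (V₂ ^ n * star (V₂ ^ n)) (P₁ x)
        = ((V₂ ^ n * star (V₂ ^ n)) ∘L P₁) x := rfl
      _ = (P₁ ∘L (V₂ ^ n * star (V₂ ^ n))) x := by rw [hQc]
      _ = P₁ ((V₂ ^ n * star (V₂ ^ n)) x) := rfl
      _ = P₁ x := by rw [hx']
  have hPcomm : P₁ ∘L P₂ = P₂ ∘L P₁ := by
    have := aux_proj_comm K₂ P₁ hP₁sa hinv12
    rw [← hP₂] at this
    exact this
  constructor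
  · exact ⟨P₁, P₂, hP₁sa, hP₁idem, hP₁range, hP₂sa, hP₂idem, hP₂range, hPcomm⟩
  · apply le_antisymm
    · apply le_inf
      · refine le_iInf fun m => le_trans (iInf_le _ (m, 0)) ?_
        simp
      · refine le_iInf fun n => le_trans (iInf_le _ (0, n)) ?_
        simp
    · refine le_iInf fun p => ?_
      intro x hx
      rw [Submodule.mem_inf] at hx
      obtain ⟨hx₁, hx₂⟩ := hx
      rw [hK₁, Submodule.mem_iInf] at hx₁
      rw [hK₂, Submodule.mem_iInf] at hx₂
      obtain ⟨m, n⟩ := p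
      have e₁ := (aux_mem_range_iff _ (aux_pow_isometry V₁ hs₁ m) x).mp (hx₁ m)
      have e₂ := (aux_mem_range_iff _ (aux_pow_isometry V₂ hs₂ n) x).mp (hx₂ n)
      refine ⟨(star (V₂ ^ n) * star (V₁ ^ m)) x, ?_⟩
      have key : V₁ ^ m * V₂ ^ n * (star (V₂ ^ n) * star (V₁ ^ m)) =
          (V₁ ^ m * star (V₁ ^ m)) * (V₂ ^ n * star (V₂ ^ n)) := by
        have d : Commute (star (V₁ ^ m)) (V₂ ^ n * star (V₂ ^ n)) := by
          rw [star_pow, star_pow]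
          exact ((c₃.pow_right n).mul_right (c₄.pow_right n)).pow_left m
        calc V₁ ^ m * V₂ ^ n * (star (V₂ ^ n) * star (V₁ ^ m))
            = V₁ ^ m * ((V₂ ^ n * star (V₂ ^ n)) * star (V₁ ^ m)) := by
              rw [mul_assoc, mul_assoc]
          _ = V₁ ^ m * (star (V₁ ^ m) * (V₂ ^ n * star (V₂ ^ n))) := by rw [d.eq]
          _ = (V₁ ^ m * star (V₁ ^ m)) * (V₂ ^ n * star (V₂ ^ n)) := by rw [mul_assoc]
      calc (V₁ ^ m * V₂ ^ n) ((star (V₂ ^ n) * star (V₁ ^ m)) x)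
          = (V₁ ^ m * V₂ ^ n * (star (V₂ ^ n) * star (V₁ ^ m))) x := rfl
        _ = ((V₁ ^ m * star (V₁ ^ m)) * (V₂ ^ n * star (V₂ ^ n))) x := by rw [key]
        _ = (V₁ ^ m * star (V₁ ^ m)) ((V₂ ^ n * star (V₂ ^ n)) x) := rfl
        _ = x := by rw [e₂, e₁]
end
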